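/- arXiv:1806.10352 — 6 statements merged into one kernel-verified Lean document; each statement's English description precedes it below -/
import Mathlib

section
/- Let k ≥ 1 be an integer and let ξ : [0,1] → ℝ be k-times absolutely continuous with integrable k-th derivative ξ^{(k)}. Then for all n ≥ 1 and all integers i with k ≤ i ≤ n one has the representation Δ_{i,k}^n ξ = ∫_{(i−1)/n}^{i/n} ∫_{s_1−1/n}^{s_1} ⋯ ∫_{s_{k−1}−1/n}^{s_{k−1}} ξ^{(k)}(s_k) ds_k ⋯ ds_1, and consequently the estimate |n^k Δ_{i,k}^n ξ| ≤ k^{k−1} ∫_{(i−k)/n}^{i/n} n |ξ^{(k)}(s)| ds. -/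
open MeasureTheory Filter Set

/-- The `k`-th order increment `Δ_{i,k}^n ξ = ∑_{j=0}^k (-1)^j (k choose j) ξ((i-j)/n)`. -/
noncomputable def kthIncrement (ξ : ℝ → ℝ) (k n i : ℕ) : ℝ :=
  ∑ j ∈ Finset.range (k + 1), (-1 : ℝ) ^ j * (k.choose j : ℝ) * ξ (((i : ℝ) - (j : ℝ)) / (n : ℝ))

/-- The nested integral operator: `nestedInt h n 0 = h` and
`nestedInt h n (m+1) s = ∫_{s-1/n}^{s} nestedInt h n m u du`, so that
`nestedInt ξ⁽ᵏ⁾ n k (i/n)` is the `k`-fold iterated integral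
`∫_{(i−1)/n}^{i/n} ∫_{s₁−1/n}^{s₁} ⋯ ∫_{s_{k−1}−1/n}^{s_{k−1}} ξ⁽ᵏ⁾(s_k) ds_k ⋯ ds₁`. -/
noncomputable def nestedInt (h : ℝ → ℝ) (n : ℕ) : ℕ → ℝ → ℝ
  | 0, s => h s
  | (m + 1), s => ∫ u in (s - 1 / (n : ℝ))..s, nestedInt h n m u


/-!
Pascal's rule turns the `(k+1)`-st backward difference of `D 0` into the `k`-th backward
difference of `s ↦ D 0 s - D 0 (s - 1/n) = ∫_{s-1/n}^{s} D 1`, and backward differences commute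
with this integral, so induction along the chain `D 0, D 1, …` gives the iterated-integral
representation. The outer `k - 1` integrals each run over an interval of length `1/n`, whence
`|nestedInt h n k s| ≤ n^{1-k} ∫_{s-k/n}^{s} |h|`; so the estimate holds even without the factor
`k^{k-1}`.
-/

theorem sum_range_alternating_choose_succ {R : Type*} [CommRing R] (m : ℕ) (g : ℕ → R) :
    ∑ j ∈ Finset.range (m + 2), (-1) ^ j * ((m + 1).choose j : R) * g j =
      ∑ j ∈ Finset.range (m + 1), (-1) ^ j * (m.choose j : R) * (g j - g (j + 1)) := by
  have hpascal (j : ℕ) : (-1) ^ (j + 1) * ((m + 1).choose (j + 1) : R) * g (j + 1) =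
      (-1) ^ (j + 1) * (m.choose (j + 1) : R) * g (j + 1) -
        (-1) ^ j * (m.choose j : R) * g (j + 1) := by
    rw [Nat.choose_succ_succ', Nat.cast_add]; ring
  have hshift :
      ∑ j ∈ Finset.range (m + 1), (-1) ^ (j + 1) * (m.choose (j + 1) : R) * g (j + 1) + g 0 =
        ∑ j ∈ Finset.range (m + 1), (-1) ^ j * (m.choose j : R) * g j := by
    simpa [Finset.sum_range_succ _ (m + 1)] using
      (Finset.sum_range_succ' (fun j ↦ (-1) ^ j * (m.choose j : R) * g j) (m + 1)).symm
  simp only [Finset.sum_range_succ' _ (m + 1), hpascal, Nat.choose_zero_right,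
    Finset.sum_sub_distrib, mul_sub]
  linear_combination hshift

theorem sub_natCast_div_mem_Icc {m j n : ℕ} {s : ℝ} (hj : j ≤ m) (hs₀ : (m : ℝ) / n ≤ s)
    (hs₁ : s ≤ 1) : s - (j : ℝ) / n ∈ Icc (0 : ℝ) 1 := by
  have : (j : ℝ) / n ≤ m / n := by gcongr
  constructor <;> linarith [show (0 : ℝ) ≤ j / n by positivity]

/-- `D j` plays the role of `ξ⁽ʲ⁾` for `j ≤ k`: on `[0,1]` each `D j` is an indefinite integral
of the integrable `D (j + 1)`. -/
def IsACDerivChain (D : ℕ → ℝ → ℝ) (k : ℕ) : Prop :=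
  ∀ j < k, IntervalIntegrable (D (j + 1)) volume 0 1 ∧
    ∀ s ∈ Icc (0 : ℝ) 1, ∀ t ∈ Icc (0 : ℝ) 1, D j t - D j s = ∫ u in s..t, D (j + 1) u

namespace IsACDerivChain

variable {D : ℕ → ℝ → ℝ} {k : ℕ}

theorem tail (hD : IsACDerivChain D (k + 1)) : IsACDerivChain (fun j ↦ D (j + 1)) k :=
  fun j hj ↦ hD (j + 1) (by omega)

theorem intervalIntegrable_comp_sub (hD : IsACDerivChain D (k + 1)) {a b c : ℝ}
    (ha : a - c ∈ Icc (0 : ℝ) 1) (hb : b - c ∈ Icc (0 : ℝ) 1) :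
    IntervalIntegrable (fun u ↦ D 1 (u - c)) volume a b := by
  simpa using ((hD 0 k.succ_pos).1.mono_set
    (uIcc_subset_uIcc (Icc_subset_uIcc ha) (Icc_subset_uIcc hb))).comp_sub_right c

theorem integral_comp_sub (hD : IsACDerivChain D (k + 1)) {a b c : ℝ}
    (ha : a - c ∈ Icc (0 : ℝ) 1) (hb : b - c ∈ Icc (0 : ℝ) 1) :
    ∫ u in a..b, D 1 (u - c) = D 0 (b - c) - D 0 (a - c) := by
  rw [intervalIntegral.integral_comp_sub_right, (hD 0 k.succ_pos).2 _ ha _ hb]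

theorem alternating_sum_eq_nestedInt (hD : IsACDerivChain D k) (n : ℕ) {s : ℝ}
    (hs₀ : (k : ℝ) / n ≤ s) (hs₁ : s ≤ 1) :
    ∑ j ∈ Finset.range (k + 1), (-1 : ℝ) ^ j * (k.choose j : ℝ) * D 0 (s - j / n) =
      nestedInt (D k) n k s := by
  induction k generalizing D s with
  | zero => simp [nestedInt]
  | succ k ih =>
    have hmem (j : ℕ) (hj : j ≤ k + 1) : s - j / n ∈ Icc (0 : ℝ) 1 :=
      sub_natCast_div_mem_Icc hj hs₀ hs₁
    have hshift (j : ℕ) : s - 1 / n - j / n = s - (j + 1 : ℕ) / n := by push_cast; ring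
    have hdiff (j : ℕ) (hj : j ∈ Finset.range (k + 1)) :
        (-1 : ℝ) ^ j * (k.choose j : ℝ) * (D 0 (s - j / n) - D 0 (s - (j + 1 : ℕ) / n)) =
          ∫ u in (s - 1 / n)..s, (-1 : ℝ) ^ j * (k.choose j : ℝ) * D 1 (u - j / n) := by
      have hj := Finset.mem_range_succ_iff.mp hj
      rw [intervalIntegral.integral_const_mul, hD.integral_comp_sub
        (by rw [hshift]; exact hmem _ (by omega)) (hmem _ (by omega)), hshift]
    have hint (j : ℕ) (hj : j ∈ Finset.range (k + 1)) :
        IntervalIntegrable (fun u ↦ (-1 : ℝ) ^ j * (k.choose j : ℝ) * D 1 (u - j / n))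
          volume (s - 1 / n) s := by
      have hj := Finset.mem_range_succ_iff.mp hj
      exact (hD.intervalIntegrable_comp_sub (by rw [hshift]; exact hmem _ (by omega))
        (hmem _ (by omega))).const_mul _
    rw [sum_range_alternating_choose_succ, Finset.sum_congr rfl hdiff,
      ← intervalIntegral.integral_finsetSum hint, nestedInt]
    refine intervalIntegral.integral_congr fun u hu ↦ ?_
    rw [uIcc_of_le (sub_le_self _ (by positivity))] at hu
    refine ih hD.tail ?_ (hu.2.trans hs₁)
    push_cast at hs₀
    linarith [hu.1, add_div (k : ℝ) 1 n]

end IsACDerivChain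

theorem abs_nestedInt_succ_le (h : ℝ → ℝ) (n m : ℕ) {s : ℝ}
    (hh : IntervalIntegrable h volume (s - (m + 1) / n) s) :
    |nestedInt h n (m + 1) s| ≤ (1 / n : ℝ) ^ m * ∫ u in (s - (m + 1) / n)..s, |h u| := by
  induction m generalizing s with
  | zero =>
    simpa [nestedInt] using intervalIntegral.abs_integral_le_integral_abs (f := h)
      (μ := volume) (sub_le_self s (by positivity : (0 : ℝ) ≤ 1 / n))
  | succ m ih =>
    push_cast at hh ⊢
    set C := (1 / n : ℝ) ^ m * ∫ u in (s - (m + 1 + 1) / n)..s, |h u|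
    have hbound (u : ℝ) (hu : u ∈ uIoc (s - 1 / n) s) : ‖nestedInt h n (m + 1) u‖ ≤ C := by
      rw [uIoc_of_le (sub_le_self s (by positivity))] at hu
      have hlo : s - (m + 1 + 1) / n ≤ u - (m + 1) / n := by
        linarith [hu.1, add_div ((m : ℝ) + 1) 1 n]
      have hle : u - (m + 1) / n ≤ u := sub_le_self u (by positivity)
      rw [Real.norm_eq_abs]
      refine (ih (hh.mono_set ?_)).trans (mul_le_mul_of_nonneg_left ?_ (by positivity))
      · rw [uIcc_of_le hle, uIcc_of_le (hlo.trans (hle.trans hu.2))]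
        exact Icc_subset_Icc hlo hu.2
      · exact intervalIntegral.integral_mono_interval hlo hle hu.2
          (Eventually.of_forall fun _ ↦ abs_nonneg _) hh.abs
    calc |nestedInt h n (m + 1 + 1) s| ≤ C * |s - (s - 1 / n)| := by
          simpa [nestedInt] using intervalIntegral.norm_integral_le_of_norm_le_const hbound
      _ = _ := by
          rw [sub_sub_cancel, abs_of_nonneg (by positivity), pow_succ]; ring

/-- equation (4.24) of the paper: for a `k`-times absolutely continuous
`ξ : [0,1] → ℝ` with integrable `k`-th derivative (given by the chain `D` with `D 0 = ξ`),
the increment `Δ_{i,k}^n ξ` equals the iterated integral of `ξ^{(k)} = D k`, and consequently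
`|n^k Δ_{i,k}^n ξ| ≤ k^{k−1} ∫_{(i−k)/n}^{i/n} n |ξ^{(k)}(s)| ds`. -/
theorem statement1
    {k : ℕ} (hk : 1 ≤ k)
    (ξ : ℝ → ℝ) (D : ℕ → ℝ → ℝ) (hD0 : D 0 = ξ)
    (hAC : ∀ j < k, IntervalIntegrable (D (j + 1)) volume 0 1 ∧
      ∀ s ∈ Set.Icc (0 : ℝ) 1, ∀ t ∈ Set.Icc (0 : ℝ) 1,
        D j t - D j s = ∫ u in s..t, D (j + 1) u) :
    ∀ n : ℕ, 1 ≤ n → ∀ i : ℕ, k ≤ i → i ≤ n →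
      kthIncrement ξ k n i = nestedInt (D k) n k ((i : ℝ) / (n : ℝ)) ∧
      |(n : ℝ) ^ k * kthIncrement ξ k n i| ≤
        (k : ℝ) ^ (k - 1) *
          ∫ s in (((i : ℝ) - (k : ℝ)) / (n : ℝ))..((i : ℝ) / (n : ℝ)), (n : ℝ) * |D k s| := by
  intro n hn i hki hin
  have hD : IsACDerivChain D k := hAC
  have hs₀ : (k : ℝ) / n ≤ i / n := by gcongr
  have hs₁ : (i : ℝ) / n ≤ 1 := div_le_one_of_le₀ (by exact_mod_cast hin) n.cast_nonneg
  have hrep : kthIncrement ξ k n i = nestedInt (D k) n k (i / n) := by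
    rw [← hD.alternating_sum_eq_nestedInt n hs₀ hs₁, kthIncrement, hD0]
    simp_rw [sub_div]
  refine ⟨hrep, ?_⟩
  obtain ⟨m, rfl⟩ : ∃ m, k = m + 1 := ⟨k - 1, by omega⟩
  have hint : IntervalIntegrable (D (m + 1)) volume (i / n - (m + 1) / n) (i / n) :=
    (hD m m.lt_succ_self).1.mono_set (uIcc_subset_uIcc
      (Icc_subset_uIcc (by simpa using sub_natCast_div_mem_Icc le_rfl hs₀ hs₁))
      (Icc_subset_uIcc ⟨by positivity, hs₁⟩))
  have hn₀ : (n : ℝ) ≠ 0 := Nat.cast_ne_zero.mpr (by omega)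
  calc |(n : ℝ) ^ (m + 1) * kthIncrement ξ (m + 1) n i|
      = (n : ℝ) ^ (m + 1) * |nestedInt (D (m + 1)) n (m + 1) (i / n)| := by
        rw [abs_mul, abs_of_nonneg (by positivity), hrep]
    _ ≤ (n : ℝ) ^ (m + 1) *
          ((1 / n : ℝ) ^ m * ∫ u in (i / n - (m + 1) / n)..(i / n), |D (m + 1) u|) := by
        gcongr; exact abs_nestedInt_succ_le _ n m hint
    _ = ∫ s in ((i - (m + 1 : ℕ)) / n : ℝ)..(i / n), (n : ℝ) * |D (m + 1) s| := by
        rw [intervalIntegral.integral_const_mul, ← mul_assoc, one_div_pow, mul_one_div, pow_succ,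
          mul_div_cancel_left₀ _ (pow_ne_zero _ hn₀), sub_div]
        push_cast; ring
    _ ≤ ((m + 1 : ℕ) : ℝ) ^ (m + 1 - 1) *
          ∫ s in ((i - (m + 1 : ℕ)) / n : ℝ)..(i / n), (n : ℝ) * |D (m + 1) s| := by
        refine le_mul_of_one_le_left (intervalIntegral.integral_nonneg ?_ fun _ _ ↦ by positivity)
          (one_le_pow₀ (by simp))
        exact div_le_div_of_nonneg_right (by linarith) n.cast_nonneg
end

section
/- Let k ≥ 1 be an integer, α > 0 and δ > 0. Let g : ℝ → ℝ vanish on (−∞,0), be continuous, satisfy g(t)/t^α → 1 as t ↓ 0, be k-times continuously differentiable on (0,∞) with |g^{(k)}(t)| ≤ C₀ t^{α−k} for all t ∈ (0,δ), and with |g^{(k)}| decreasing on (δ,∞). For n ∈ ℕ and i ≥ k define g_{i,n}(s) := ∑_{j=0}^k (−1)^j binom(k,j) g((i−j)/n − s). Then there exists a constant C > 0 such that for all n and i ≥ k: (a) |g_{i,n}(s)| ≤ C (i/n − s)^α for s ∈ [(i−k−1)/n, i/n]; (b) |g_{i,n}(s)| ≤ C n^{−k} ((i−k)/n − s)^{α−k}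 for s ∈ (i/n − δ, (i−k−1)/n); (c) |g_{i,n}(s)| ≤ C n^{−k} ( 1_{[(i−k)/n−δ, i/n−δ]}(s) + |g^{(k)}((i−k)/n − s)| 1_{(−∞,(i−k)/n−δ)}(s) ) for s ∈ (−∞, i/n − δ]. -/
/-!
Write `x = (i - k)/n - s`. The kernel `g_{i,n}(s)` is the `k`-th forward difference of `g` with
step `1/n` at `x`, so by the mean value theorem it is at most `n^{-k} sup_{[x, x + k/n]} |g^{(k)}|`.
When `x > 1/n` that interval lies in `[x, (k+1)x]`, on which `t^{α-k}` is comparable with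
`x^{α-k}`: this is (b). For `x > δ` the monotonicity of `|g^{(k)}|` puts the supremum at `x`, and
for `δ - k/n ≤ x ≤ δ` the derivative is bounded once `k/n ≤ δ/2`: this is (c). In the remaining
cases, (a) and (c) with `n < 2k/δ`, the trivial bound `2^k sup |g|` together with
`|g(t)| = O(t^α)` suffices.
-/

open MeasureTheory Filter Set Topology

/-- The kernel of the `k`-th order increment of the moving average:
`g_{i,n}(s) = ∑_{j=0}^k (−1)^j (k choose j) g((i−j)/n − s)`. -/
noncomputable def ginKernel (g : ℝ → ℝ) (k n i : ℕ) (s : ℝ) : ℝ :=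
  ∑ j ∈ Finset.range (k + 1), (-1 : ℝ) ^ j * (k.choose j : ℝ) *
    g (((i : ℝ) - (j : ℝ)) / (n : ℝ) - s)

open fwdDiff Real

theorem ContDiffAt.hasDerivAt_iteratedDeriv {f : ℝ → ℝ} {m : ℕ} {x : ℝ}
    (hf : ContDiffAt ℝ (m + 1 : ℕ) f x) :
    HasDerivAt (iteratedDeriv m f) (iteratedDeriv (m + 1) f x) x := by
  have h := (hf.differentiableAt_iteratedFDeriv (m := m) (by norm_cast; omega)).hasFDerivAt
  have hm : iteratedDeriv m f = fun y => iteratedFDeriv ℝ m f y (fun _ => 1) :=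
    funext fun _ => iteratedDeriv_eq_iteratedFDeriv
  rw [iteratedDeriv_succ, hm]
  exact (h.continuousMultilinear_apply_const _).differentiableAt.hasDerivAt

theorem iteratedDeriv_fwdDiff {f : ℝ → ℝ} {m : ℕ} {x h : ℝ}
    (hfx : ContDiffAt ℝ m f x) (hfxh : ContDiffAt ℝ m f (x + h)) :
    iteratedDeriv m (Δ_[h] f) x = iteratedDeriv m f (x + h) - iteratedDeriv m f x := by
  have hshift : ContDiffAt ℝ m (fun y => f (y + h)) x :=
    hfxh.comp x (contDiffAt_id.add contDiffAt_const)
  have : Δ_[h] f = (fun y => f (y + h)) - f := rfl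
  rw [this, iteratedDeriv_sub hshift hfx, iteratedDeriv_comp_add_const]

theorem abs_fwdDiff_iter_le {f : ℝ → ℝ} {m : ℕ} {x h M : ℝ} (hh : 0 ≤ h)
    (hf : ∀ t ∈ Icc x (x + m * h), ContDiffAt ℝ m f t)
    (hM : ∀ t ∈ Icc x (x + m * h), |iteratedDeriv m f t| ≤ M) :
    |(Δ_[h])^[m] f x| ≤ h ^ m * M := by
  induction m generalizing f M with
  | zero => simpa using hM x (by simp)
  | succ m ih =>
    have hsub : ∀ t ∈ Icc x (x + m * h), Icc t (t + h) ⊆ Icc x (x + (m + 1 : ℕ) * h) :=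
      fun t ht => Icc_subset_Icc ht.1 (by push_cast; linarith [ht.2])
    have hreg : ∀ t ∈ Icc x (x + m * h), ∀ u ∈ Icc t (t + h), ContDiffAt ℝ m f u :=
      fun t ht u hu => (hf u (hsub t ht hu)).of_le (by norm_cast; omega)
    have hl : ∀ t, t ∈ Icc t (t + h) := fun t => left_mem_Icc.2 (by linarith)
    have hr : ∀ t, t + h ∈ Icc t (t + h) := fun t => right_mem_Icc.2 (by linarith)
    have hstep : |(Δ_[h])^[m] (Δ_[h] f) x| ≤ h ^ m * (h * M) := by
      refine ih (fun t ht => ?_) (fun t ht => ?_)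
      · exact ((hreg t ht _ (hr t)).comp t (contDiffAt_id.add contDiffAt_const)).sub
          (hreg t ht _ (hl t))
      · rw [iteratedDeriv_fwdDiff (hreg t ht _ (hl t)) (hreg t ht _ (hr t))]
        have := norm_image_sub_le_of_norm_deriv_le_segment'
          (fun u hu => (hf u (hsub t ht hu)).hasDerivAt_iteratedDeriv.hasDerivWithinAt)
          (fun u hu => hM u (hsub t ht (Ico_subset_Icc_self hu))) (t + h) (hr t)
        simpa [Real.norm_eq_abs, mul_comm] using this
    rw [Function.iterate_succ_apply, pow_succ, mul_assoc]
    exact hstep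

theorem Continuous.eq_zero_of_nonpos {g : ℝ → ℝ} (hgc : Continuous g) (hg0 : ∀ t < 0, g t = 0)
    {t : ℝ} (ht : t ≤ 0) : g t = 0 :=
  Set.EqOn.of_subset_closure (g := 0) (s := Iio 0) hg0 hgc.continuousOn continuousOn_const
    Iio_subset_Iic_self (closure_Iio (0 : ℝ)).ge ht

theorem exists_abs_le_mul_rpow_of_tendsto {g : ℝ → ℝ} {α c T : ℝ}
    (hgc : ContinuousOn g (Ioc 0 T)) (hgα : Tendsto (fun t => g t / t ^ α) (𝓝[>] 0) (𝓝 c)) :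
    ∃ C ≥ 0, ∀ t ∈ Ioc 0 T, |g t| ≤ C * t ^ α := by
  obtain ⟨ε, hε, hnear⟩ := mem_nhdsGT_iff_exists_Ioo_subset.1
    (hgα.abs.eventually (eventually_le_nhds (lt_add_one |c|)))
  obtain ⟨B, hB⟩ := isCompact_Icc.exists_bound_of_continuousOn (f := fun t => g t / t ^ α)
    (s := Icc ε T) <| (hgc.mono fun t ht => ⟨hε.trans_le ht.1, ht.2⟩).div
      (continuousOn_id.rpow_const fun t ht => Or.inl (hε.trans_le ht.1).ne')
      fun t ht => (rpow_pos_of_pos (hε.trans_le ht.1) α).ne'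
  refine ⟨max (|c| + 1) B, le_max_of_le_left (by positivity), fun t ht => ?_⟩
  have htα : 0 < t ^ α := rpow_pos_of_pos ht.1 α
  have hratio : |g t / t ^ α| ≤ max (|c| + 1) B := by
    rcases lt_or_ge t ε with h | h
    · exact (hnear ⟨ht.1, h⟩).trans (le_max_left _ _)
    · exact (hB t ⟨h, ht.2⟩).trans (le_max_right _ _)
  rwa [abs_div, abs_of_pos htα, div_le_iff₀ htα] at hratio

theorem exists_abs_le_mul_rpow_of_le {g : ℝ → ℝ} {α c : ℝ} (hα : 0 ≤ α) (hgc : Continuous g)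
    (hg0 : ∀ t < 0, g t = 0) (hgα : Tendsto (fun t => g t / t ^ α) (𝓝[>] 0) (𝓝 c)) (T : ℝ) :
    ∃ C ≥ 0, ∀ t r, t ≤ r → r ∈ Icc 0 T → |g t| ≤ C * r ^ α := by
  obtain ⟨C, hC, hbound⟩ := exists_abs_le_mul_rpow_of_tendsto (T := T) hgc.continuousOn hgα
  refine ⟨C, hC, fun t r htr hr => ?_⟩
  rcases le_or_gt t 0 with ht | ht
  · rw [hgc.eq_zero_of_nonpos hg0 ht, abs_zero]
    exact mul_nonneg hC (rpow_nonneg hr.1 α)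
  · exact (hbound t ⟨ht, htr.trans hr.2⟩).trans
      (mul_le_mul_of_nonneg_left (rpow_le_rpow ht.le htr hα) hC)

theorem rpow_le_max_mul_rpow {x t c β : ℝ} (hx : 0 < x) (hxt : x ≤ t) (htc : t ≤ c * x) :
    t ^ β ≤ max (c ^ β) 1 * x ^ β := by
  rcases le_or_gt 0 β with hβ | hβ
  · have hc : 0 ≤ c := nonneg_of_mul_nonneg_left (hx.le.trans (hxt.trans htc)) hx
    calc t ^ β ≤ (c * x) ^ β := rpow_le_rpow (hx.le.trans hxt) htc hβ
      _ = c ^ β * x ^ β := mul_rpow hc hx.le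
      _ ≤ max (c ^ β) 1 * x ^ β :=
        mul_le_mul_of_nonneg_right (le_max_left _ _) (rpow_nonneg hx.le β)
  · calc t ^ β ≤ x ^ β := rpow_le_rpow_of_nonpos hx hxt hβ.le
      _ ≤ max (c ^ β) 1 * x ^ β := le_mul_of_one_le_left (rpow_nonneg hx.le β) (le_max_right _ _)

theorem exists_abs_le_of_antitoneOn_abs {F : ℝ → ℝ} {a b c : ℝ} (hab : a ≤ b) (hcb : c < b)
    (hF : ContinuousOn F (Icc a b)) (hanti : AntitoneOn (fun t => |F t|) (Ioi c)) :
    ∃ M, ∀ t, a ≤ t → |F t| ≤ M := by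
  obtain ⟨M, hM⟩ := isCompact_Icc.exists_bound_of_continuousOn hF
  refine ⟨M, fun t ht => ?_⟩
  rcases le_or_gt t b with htb | htb
  · exact hM t ⟨ht, htb⟩
  · exact (hanti hcb (hcb.trans htb) htb.le).trans (hM b ⟨hab, le_rfl⟩)

theorem ginKernel_eq_fwdDiff_iter (g : ℝ → ℝ) (k n i : ℕ) (s : ℝ) :
    ginKernel g k n i s = (Δ_[(n : ℝ)⁻¹])^[k] g (((i : ℝ) - k) / n - s) := by
  rw [fwdDiff_iter_eq_sum_shift, ginKernel, ← Finset.sum_range_reflect]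
  refine Finset.sum_congr rfl fun j hj => ?_
  have hjk : j ≤ k := Nat.lt_succ_iff.1 (Finset.mem_range.1 hj)
  rw [show k + 1 - 1 - j = k - j by omega, Nat.choose_symm hjk, zsmul_eq_mul, nsmul_eq_mul,
    Nat.cast_sub hjk]
  push_cast
  ring_nf

theorem abs_ginKernel_le_of_abs_le {g : ℝ → ℝ} {k n i : ℕ} {s D : ℝ}
    (hD : ∀ j ≤ k, |g (((i : ℝ) - j) / n - s)| ≤ D) : |ginKernel g k n i s| ≤ 2 ^ k * D := by
  calc |ginKernel g k n i s|
      ≤ ∑ j ∈ Finset.range (k + 1), (k.choose j : ℝ) * D := by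
        refine (Finset.abs_sum_le_sum_abs _ _).trans (Finset.sum_le_sum fun j hj => ?_)
        rw [abs_mul, abs_mul, abs_pow, abs_neg, abs_one, one_pow, one_mul, Nat.abs_cast]
        exact mul_le_mul_of_nonneg_left (hD j (Nat.lt_succ_iff.1 (Finset.mem_range.1 hj)))
          (Nat.cast_nonneg _)
    _ = 2 ^ k * D := by
        rw [← Finset.sum_mul, ← Nat.cast_sum, Nat.sum_range_choose, Nat.cast_pow, Nat.cast_ofNat]

theorem abs_ginKernel_le_of_abs_iteratedDerivWithin_le {g : ℝ → ℝ} {k n i : ℕ} {s M : ℝ}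
    (hgk : ContDiffOn ℝ (k : ℕ∞) g (Ioi 0)) (hx : 0 < ((i : ℝ) - k) / n - s)
    (hM : ∀ t ∈ Icc (((i : ℝ) - k) / n - s) (i / n - s),
      |iteratedDerivWithin k g (Ioi 0) t| ≤ M) :
    |ginKernel g k n i s| ≤ ((n : ℝ) ^ k)⁻¹ * M := by
  have hend : ((i : ℝ) - k) / n - s + k * (n : ℝ)⁻¹ = i / n - s := by ring
  rw [ginKernel_eq_fwdDiff_iter, ← inv_pow]
  refine abs_fwdDiff_iter_le (inv_nonneg.2 n.cast_nonneg) (fun t ht => ?_) (fun t ht => ?_)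
  · exact hgk.contDiffAt (Ioi_mem_nhds (hx.trans_le ht.1))
  · rw [← iteratedDerivWithin_of_isOpen isOpen_Ioi (hx.trans_le ht.1)]
    exact hM t (hend ▸ ht)

theorem eventually_abs_ginKernel_le_near {g : ℝ → ℝ} {α c : ℝ} (k : ℕ) (hα : 0 ≤ α)
    (hgc : Continuous g) (hg0 : ∀ t < 0, g t = 0)
    (hgα : Tendsto (fun t => g t / t ^ α) (𝓝[>] 0) (𝓝 c)) :
    ∀ᶠ C in atTop, ∀ n : ℕ, 1 ≤ n → ∀ i : ℕ,
      ∀ s ∈ Icc (((i : ℝ) - k - 1) / n) (i / n), |ginKernel g k n i s| ≤ C * (i / n - s) ^ α := by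
  obtain ⟨B, hB0, hB⟩ := exists_abs_le_mul_rpow_of_le hα hgc hg0 hgα (k + 1)
  filter_upwards [eventually_ge_atTop (2 ^ k * B)] with C hC n hn i s hs
  have hr : (i : ℝ) / n - s ∈ Icc (0 : ℝ) (k + 1) := by
    refine ⟨by linarith [hs.2], ?_⟩
    calc (i : ℝ) / n - s ≤ i / n - (i - k - 1) / n := by linarith [hs.1]
      _ = (k + 1) / n := by ring
      _ ≤ k + 1 := div_le_self (by positivity) (by exact_mod_cast hn)
  calc |ginKernel g k n i s| ≤ 2 ^ k * (B * (i / n - s) ^ α) :=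
        abs_ginKernel_le_of_abs_le fun j _ =>
          hB _ _ (by gcongr; exact sub_le_self _ j.cast_nonneg) hr
    _ ≤ C * (i / n - s) ^ α := by
        rw [← mul_assoc]; exact mul_le_mul_of_nonneg_right hC (rpow_nonneg hr.1 α)

theorem eventually_abs_ginKernel_le_mid {g : ℝ → ℝ} {k : ℕ} {α δ C₀ : ℝ}
    (hgk : ContDiffOn ℝ (k : ℕ∞) g (Ioi 0))
    (hgkb : ∀ t ∈ Ioo 0 δ, |iteratedDerivWithin k g (Ioi 0) t| ≤ C₀ * t ^ (α - k)) :
    ∀ᶠ C in atTop, ∀ n : ℕ, 1 ≤ n → ∀ i : ℕ, ∀ s ∈ Ioo ((i : ℝ) / n - δ) (((i : ℝ) - k - 1) / n),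
      |ginKernel g k n i s| ≤ C * ((n : ℝ) ^ k)⁻¹ * (((i : ℝ) - k) / n - s) ^ (α - k) := by
  set K := max (((k : ℝ) + 1) ^ (α - k)) 1
  filter_upwards [eventually_ge_atTop (|C₀| * K)] with C hC n hn i s hs
  set x := ((i : ℝ) - k) / n - s
  have hn0 : (0 : ℝ) < n := by exact_mod_cast hn
  have hx : (n : ℝ)⁻¹ < x := by
    have : ((i : ℝ) - k - 1) / n = ((i : ℝ) - k) / n - (n : ℝ)⁻¹ := by ring
    linarith [hs.2]
  have hx0 : 0 < x := (inv_pos.2 hn0).trans hx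
  have hend : (i : ℝ) / n - s = x + k * (n : ℝ)⁻¹ := by ring
  have hxβ : 0 ≤ x ^ (α - k) := rpow_nonneg hx0.le _
  calc |ginKernel g k n i s| ≤ ((n : ℝ) ^ k)⁻¹ * (|C₀| * (K * x ^ (α - k))) := by
        refine abs_ginKernel_le_of_abs_iteratedDerivWithin_le hgk hx0 fun t ht => ?_
        have ht0 : 0 < t := hx0.trans_le ht.1
        have htδ : t < δ := by linarith [ht.2, hs.1]
        have htx : t ≤ (k + 1) * x := by
          nlinarith [ht.2, mul_le_mul_of_nonneg_left hx.le (Nat.cast_nonneg (α := ℝ) k)]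
        calc |iteratedDerivWithin k g (Ioi 0) t| ≤ C₀ * t ^ (α - k) := hgkb t ⟨ht0, htδ⟩
          _ ≤ |C₀| * t ^ (α - k) :=
            mul_le_mul_of_nonneg_right (le_abs_self _) (rpow_nonneg ht0.le _)
          _ ≤ |C₀| * (K * x ^ (α - k)) :=
            mul_le_mul_of_nonneg_left (rpow_le_max_mul_rpow hx0 ht.1 htx) (abs_nonneg _)
    _ = (|C₀| * K) * ((n : ℝ) ^ k)⁻¹ * x ^ (α - k) := by ring
    _ ≤ C * ((n : ℝ) ^ k)⁻¹ * x ^ (α - k) := by gcongr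

theorem abs_ginKernel_le_far {g : ℝ → ℝ} {k n i : ℕ} {δ s : ℝ} (hδ : 0 < δ)
    (hgk : ContDiffOn ℝ (k : ℕ∞) g (Ioi 0))
    (hdec : AntitoneOn (fun t => |iteratedDerivWithin k g (Ioi 0) t|) (Ioi δ))
    (hs : s < ((i : ℝ) - k) / n - δ) :
    |ginKernel g k n i s| ≤
      ((n : ℝ) ^ k)⁻¹ * |iteratedDerivWithin k g (Ioi 0) (((i : ℝ) - k) / n - s)| := by
  have hxδ : δ < ((i : ℝ) - k) / n - s := by linarith
  exact abs_ginKernel_le_of_abs_iteratedDerivWithin_le hgk (hδ.trans hxδ)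
    fun t ht => hdec hxδ (hxδ.trans_le ht.1) ht.1

theorem eventually_abs_ginKernel_le_transition {g : ℝ → ℝ} {k : ℕ} {α c δ : ℝ} (hα : 0 ≤ α)
    (hδ : 0 < δ) (hgc : Continuous g) (hg0 : ∀ t < 0, g t = 0)
    (hgα : Tendsto (fun t => g t / t ^ α) (𝓝[>] 0) (𝓝 c))
    (hgk : ContDiffOn ℝ (k : ℕ∞) g (Ioi 0))
    (hdec : AntitoneOn (fun t => |iteratedDerivWithin k g (Ioi 0) t|) (Ioi δ)) :
    ∀ᶠ C in atTop, ∀ n : ℕ, 1 ≤ n → ∀ i : ℕ, ∀ s : ℝ,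
      ((i : ℝ) - k) / n - δ ≤ s → s ≤ (i : ℝ) / n - δ →
        |ginKernel g k n i s| ≤ C * ((n : ℝ) ^ k)⁻¹ := by
  obtain ⟨M, hM⟩ := exists_abs_le_of_antitoneOn_abs (a := δ / 2) (by linarith) (lt_two_mul_self hδ)
    ((hgk.continuousOn_iteratedDerivWithin le_rfl (uniqueDiffOn_Ioi 0)).mono
      fun t ht => (half_pos hδ).trans_le ht.1) hdec
  obtain ⟨B, hB0, hB⟩ := exists_abs_le_mul_rpow_of_le hα hgc hg0 hgα (δ + k)
  set G := 2 ^ k * (B * (δ + k) ^ α)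
  filter_upwards [eventually_ge_atTop (max M (G * (2 * k / δ) ^ k))] with C hC n hn i s hs₁ hs₂
  have hn0 : (0 : ℝ) < n := by exact_mod_cast hn
  have hend : (i : ℝ) / n - s = ((i : ℝ) - k) / n - s + k / n := by ring
  rcases le_or_gt ((k : ℝ) / n) (δ / 2) with hsmall | hlarge
  · calc |ginKernel g k n i s| ≤ ((n : ℝ) ^ k)⁻¹ * M :=
          abs_ginKernel_le_of_abs_iteratedDerivWithin_le hgk (by linarith)
            fun t ht => hM t (by linarith [ht.1])
      _ ≤ C * ((n : ℝ) ^ k)⁻¹ := by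
          rw [mul_comm]; gcongr; exact (le_max_left _ _).trans hC
  · -- for such small `n` the crude bound already has the order `n ^ (-k)`
    have hpow : 1 ≤ (2 * k / δ) ^ k * ((n : ℝ) ^ k)⁻¹ := by
      rw [← inv_pow, ← mul_pow]
      refine one_le_pow₀ ?_
      rw [show 2 * (k : ℝ) / δ * (n : ℝ)⁻¹ = (k / n) / (δ / 2) by field_simp]
      exact (one_le_div (by positivity)).2 hlarge.le
    have hkn : (k : ℝ) / n ≤ k := div_le_self (Nat.cast_nonneg k) (by exact_mod_cast hn)
    calc |ginKernel g k n i s| ≤ G :=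
          abs_ginKernel_le_of_abs_le fun j _ => hB _ _ (by
            have : ((i : ℝ) - j) / n ≤ i / n := by gcongr; exact sub_le_self _ j.cast_nonneg
            linarith) ⟨by positivity, le_rfl⟩
      _ ≤ G * ((2 * k / δ) ^ k * ((n : ℝ) ^ k)⁻¹) := le_mul_of_one_le_right (by positivity) hpow
      _ ≤ C * ((n : ℝ) ^ k)⁻¹ := by
          rw [← mul_assoc]; gcongr; exact (le_max_right _ _).trans hC

theorem eventually_abs_ginKernel_le_tail {g : ℝ → ℝ} {k : ℕ} {α c δ : ℝ} (hα : 0 ≤ α)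
    (hδ : 0 < δ) (hgc : Continuous g) (hg0 : ∀ t < 0, g t = 0)
    (hgα : Tendsto (fun t => g t / t ^ α) (𝓝[>] 0) (𝓝 c))
    (hgk : ContDiffOn ℝ (k : ℕ∞) g (Ioi 0))
    (hdec : AntitoneOn (fun t => |iteratedDerivWithin k g (Ioi 0) t|) (Ioi δ)) :
    ∀ᶠ C in atTop, ∀ n : ℕ, 1 ≤ n → ∀ i : ℕ, ∀ s : ℝ, s ≤ (i : ℝ) / n - δ →
      |ginKernel g k n i s| ≤ C * ((n : ℝ) ^ k)⁻¹ *
        ((if ((i : ℝ) - k) / n - δ ≤ s ∧ s ≤ (i : ℝ) / n - δ then (1 : ℝ) else 0) +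
          |iteratedDerivWithin k g (Ioi 0) (((i : ℝ) - k) / n - s)| *
            (if s < ((i : ℝ) - k) / n - δ then (1 : ℝ) else 0)) := by
  filter_upwards [eventually_abs_ginKernel_le_transition hα hδ hgc hg0 hgα hgk hdec,
    eventually_ge_atTop 1] with C hC hC1 n hn i s hs
  rcases lt_or_ge s (((i : ℝ) - k) / n - δ) with hfar | hfar
  · rw [if_neg fun h => not_le.2 hfar h.1, if_pos hfar, zero_add, mul_one, mul_assoc]
    exact (abs_ginKernel_le_far hδ hgk hdec hfar).trans (le_mul_of_one_le_left (by positivity) hC1)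
  · rw [if_pos ⟨hfar, hs⟩, if_neg (not_lt.2 hfar), mul_zero, add_zero, mul_one]
    exact hC n hn i s hfar hs

theorem statement6_general
    {k : ℕ} {α δ C₀ : ℝ} (hα : 0 < α) (hδ : 0 < δ)
    (g : ℝ → ℝ)
    (hg0 : ∀ t < (0 : ℝ), g t = 0)
    (hgc : Continuous g)
    (hgα : Tendsto (fun t => g t / t ^ α) (𝓝[>] (0 : ℝ)) (nhds 1))
    (hgk : ContDiffOn ℝ (k : ℕ∞) g (Set.Ioi (0 : ℝ)))
    (hgkb : ∀ t ∈ Set.Ioo (0 : ℝ) δ,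
      |iteratedDerivWithin k g (Set.Ioi (0 : ℝ)) t| ≤ C₀ * t ^ (α - (k : ℝ)))
    (hdec : AntitoneOn (fun t => |iteratedDerivWithin k g (Set.Ioi (0 : ℝ)) t|)
      (Set.Ioi δ)) :
    ∃ C > (0 : ℝ), ∀ n : ℕ, 1 ≤ n → ∀ i : ℕ, k ≤ i →
      (∀ s ∈ Set.Icc (((i : ℝ) - (k : ℝ) - 1) / (n : ℝ)) ((i : ℝ) / (n : ℝ)),
        |ginKernel g k n i s| ≤ C * ((i : ℝ) / (n : ℝ) - s) ^ α) ∧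
      (∀ s ∈ Set.Ioo ((i : ℝ) / (n : ℝ) - δ) (((i : ℝ) - (k : ℝ) - 1) / (n : ℝ)),
        |ginKernel g k n i s| ≤
          C * ((n : ℝ) ^ k)⁻¹ * (((i : ℝ) - (k : ℝ)) / (n : ℝ) - s) ^ (α - (k : ℝ))) ∧
      (∀ s : ℝ, s ≤ (i : ℝ) / (n : ℝ) - δ →
        |ginKernel g k n i s| ≤
          C * ((n : ℝ) ^ k)⁻¹ *
            ((if ((i : ℝ) - (k : ℝ)) / (n : ℝ) - δ ≤ s ∧ s ≤ (i : ℝ) / (n : ℝ) - δ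
                then (1 : ℝ) else 0) +
              |iteratedDerivWithin k g (Set.Ioi (0 : ℝ)) (((i : ℝ) - (k : ℝ)) / (n : ℝ) - s)| *
                (if s < ((i : ℝ) - (k : ℝ)) / (n : ℝ) - δ then (1 : ℝ) else 0))) := by
  obtain ⟨C, hC, hnear, hmid, htail⟩ := ((eventually_gt_atTop 0).and
    ((eventually_abs_ginKernel_le_near k hα.le hgc hg0 hgα).and
      ((eventually_abs_ginKernel_le_mid hgk hgkb).and
        (eventually_abs_ginKernel_le_tail hα.le hδ hgc hg0 hgα hgk hdec)))).exists
  exact ⟨C, hC, fun n hn i _ => ⟨hnear n hn i, hmid n hn i, htail n hn i⟩⟩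

/-- Lemma 3.1 of the paper: under the analytic parts of Assumption (A)
on the kernel `g` — vanishing on `(−∞,0)`, continuous, `g(t) ∼ t^α` at `0`, `k`-times
continuously differentiable on `(0,∞)` with `|g^{(k)}(t)| ≤ C₀ t^{α−k}` on `(0,δ)` and
`|g^{(k)}|` decreasing on `(δ,∞)` — there is `C > 0` such that for all `n ≥ 1`, `i ≥ k`:
(a) `|g_{i,n}(s)| ≤ C (i/n − s)^α` on `[(i−k−1)/n, i/n]`;
(b) `|g_{i,n}(s)| ≤ C n^{−k} ((i−k)/n − s)^{α−k}` on `(i/n − δ, (i−k−1)/n)`;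
(c) `|g_{i,n}(s)| ≤ C n^{−k} (1_{[(i−k)/n−δ, i/n−δ]}(s) + |g^{(k)}((i−k)/n − s)| 1_{(−∞,(i−k)/n−δ)}(s))`
for `s ≤ i/n − δ`. -/
theorem statement6
    {k : ℕ} (hk : 1 ≤ k) {α δ C₀ : ℝ} (hα : 0 < α) (hδ : 0 < δ)
    (g : ℝ → ℝ)
    (hg0 : ∀ t < (0 : ℝ), g t = 0)
    (hgc : Continuous g)
    (hgα : Tendsto (fun t => g t / t ^ α) (𝓝[>] (0 : ℝ)) (nhds 1))
    (hgk : ContDiffOn ℝ (k : ℕ∞) g (Set.Ioi (0 : ℝ)))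
    (hgkb : ∀ t ∈ Set.Ioo (0 : ℝ) δ,
      |iteratedDerivWithin k g (Set.Ioi (0 : ℝ)) t| ≤ C₀ * t ^ (α - (k : ℝ)))
    (hdec : AntitoneOn (fun t => |iteratedDerivWithin k g (Set.Ioi (0 : ℝ)) t|)
      (Set.Ioi δ)) :
    ∃ C > (0 : ℝ), ∀ n : ℕ, 1 ≤ n → ∀ i : ℕ, k ≤ i →
      (∀ s ∈ Set.Icc (((i : ℝ) - (k : ℝ) - 1) / (n : ℝ)) ((i : ℝ) / (n : ℝ)),
        |ginKernel g k n i s| ≤ C * ((i : ℝ) / (n : ℝ) - s) ^ α) ∧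
      (∀ s ∈ Set.Ioo ((i : ℝ) / (n : ℝ) - δ) (((i : ℝ) - (k : ℝ) - 1) / (n : ℝ)),
        |ginKernel g k n i s| ≤
          C * ((n : ℝ) ^ k)⁻¹ * (((i : ℝ) - (k : ℝ)) / (n : ℝ) - s) ^ (α - (k : ℝ))) ∧
      (∀ s : ℝ, s ≤ (i : ℝ) / (n : ℝ) - δ →
        |ginKernel g k n i s| ≤
          C * ((n : ℝ) ^ k)⁻¹ *
            ((if ((i : ℝ) - (k : ℝ)) / (n : ℝ) - δ ≤ s ∧ s ≤ (i : ℝ) / (n : ℝ) - δ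
                then (1 : ℝ) else 0) +
              |iteratedDerivWithin k g (Set.Ioi (0 : ℝ)) (((i : ℝ) - (k : ℝ)) / (n : ℝ) - s)| *
                (if s < ((i : ℝ) - (k : ℝ)) / (n : ℝ) - δ then (1 : ℝ) else 0))) :=
  statement6_general hα hδ g hg0 hgc hgα hgk hgkb hdec
end

section
/- Let p ∈ [0,1] and C > 0, and let Φ : ℝ → ℝ be twice continuously differentiable with |Φ'(x)| ≤ C and |Φ''(x)| ≤ C for all x ∈ ℝ, and |Φ(x) − Φ(y)| ≤ C |x−y|^p for all x, y ∈ ℝ. Then there exists a constant C' > 0 such that for all a ∈ ℝ and all x, y > 0, F(a,x,y) := |∫_0^y ∫_0^x Φ''(a+u+v) du dv| ≤ C' (x^p ∧ x)(y^p ∧ y). -/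
/-!
By the fundamental theorem of calculus, applied once in each variable, the double integral is the
second difference `Φ(a+x+y) − Φ(a+x) − Φ(a+y) + Φ(a)`. Grouping it as a difference of two
increments of length `x` (or `y`), each bounded by `C (s^p ∧ s)` via the Hölder bound and the mean
value theorem, gives `2C (x^p ∧ x)` (and `2C (y^p ∧ y)`); bounding the integrand by `C` gives `Cxy`.
When `x, y ≤ 1` the last bound is the claim, and otherwise one of the factors `s^p ∧ s` is `≥ 1`.
-/

open intervalIntegral

section SecondDifference

variable {E : Type*} [NormedAddCommGroup E] [NormedSpace ℝ E] [CompleteSpace E]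

theorem integral_integral_deriv_deriv_eq_second_diff {Φ : ℝ → E} (hΦ : ContDiff ℝ 2 Φ)
    (a x y : ℝ) :
    ∫ v in (0 : ℝ)..y, ∫ u in (0 : ℝ)..x, deriv (deriv Φ) (a + u + v) =
      Φ (a + x + y) - Φ (a + x) - (Φ (a + y) - Φ a) := by
  have hΦ' : ContDiff ℝ 1 (deriv Φ) :=
    (contDiff_succ_iff_deriv.mp (show ContDiff ℝ (1 + 1) Φ from hΦ)).2.2
  have ftc : ∀ c d, ∫ t in c..d, deriv Φ t = Φ d - Φ c := fun c d =>
    integral_deriv_eq_sub (fun t _ => hΦ.differentiable (by norm_num) t)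
      (hΦ'.continuous.intervalIntegrable _ _)
  have ftc' : ∀ c d, ∫ t in c..d, deriv (deriv Φ) t = deriv Φ d - deriv Φ c := fun c d =>
    integral_deriv_eq_sub (fun t _ => hΦ'.differentiable one_ne_zero t)
      ((hΦ'.continuous_deriv le_rfl).intervalIntegrable _ _)
  have inner : ∀ v, ∫ u in (0 : ℝ)..x, deriv (deriv Φ) (a + u + v) =
      deriv Φ (a + x + v) - deriv Φ (a + v) := fun v => by
    simp_rw [add_right_comm a _ v]
    rw [integral_comp_add_left (deriv (deriv Φ)) (a + v), ftc', add_zero]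
  have hshift : ∀ c, Continuous fun v => deriv Φ (c + v) := fun c =>
    hΦ'.continuous.comp (continuous_const_add c)
  simp_rw [inner]
  rw [integral_sub ((hshift _).intervalIntegrable _ _) ((hshift _).intervalIntegrable _ _),
    integral_comp_add_left (deriv Φ), integral_comp_add_left (deriv Φ), ftc, ftc,
    add_zero, add_zero]

end SecondDifference

theorem norm_integral_integral_le_of_norm_le_const {E : Type*} [NormedAddCommGroup E]
    [NormedSpace ℝ E] {f : ℝ → ℝ → E} {C : ℝ} (hf : ∀ u v, ‖f u v‖ ≤ C) (x y : ℝ) :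
    ‖∫ v in (0 : ℝ)..y, ∫ u in (0 : ℝ)..x, f u v‖ ≤ C * |x| * |y| := by
  have hinner : ∀ v, ‖∫ u in (0 : ℝ)..x, f u v‖ ≤ C * |x| := fun v => by
    simpa using norm_integral_le_of_norm_le_const (a := 0) (b := x) fun u _ => hf u v
  simpa using norm_integral_le_of_norm_le_const (a := 0) (b := y) fun v _ => hinner v

section Increments

variable {p C : ℝ} {Φ : ℝ → ℝ}

theorem abs_sub_le_mul_min_rpow_self (hΦ : Differentiable ℝ Φ) (hd : ∀ x, |deriv Φ x| ≤ C)
    (hH : ∀ x y, |Φ x - Φ y| ≤ C * |x - y| ^ p) (c : ℝ) {s : ℝ} (hs : 0 ≤ s) :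
    |Φ (c + s) - Φ c| ≤ C * min (s ^ p) s := by
  have hLip : |Φ (c + s) - Φ c| ≤ C * s := by
    simpa [abs_of_nonneg hs] using
      convex_univ.norm_image_sub_le_of_norm_deriv_le (fun t _ => hΦ t) (fun t _ => hd t)
        (Set.mem_univ c) (Set.mem_univ (c + s))
  have hHol : |Φ (c + s) - Φ c| ≤ C * s ^ p := by simpa [abs_of_nonneg hs] using hH (c + s) c
  rcases min_choice (s ^ p) s with h | h <;> rw [h] <;> assumption

theorem abs_sub_sub_sub_le_mul_min_rpow_self (hΦ : Differentiable ℝ Φ)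
    (hd : ∀ x, |deriv Φ x| ≤ C) (hH : ∀ x y, |Φ x - Φ y| ≤ C * |x - y| ^ p)
    (b c : ℝ) {s : ℝ} (hs : 0 ≤ s) :
    |Φ (b + s) - Φ b - (Φ (c + s) - Φ c)| ≤ 2 * C * min (s ^ p) s := by
  have hb := abs_sub_le_mul_min_rpow_self hΦ hd hH b hs
  have hc := abs_sub_le_mul_min_rpow_self hΦ hd hH c hs
  linarith [abs_sub (Φ (b + s) - Φ b) (Φ (c + s) - Φ c)]

end Increments

section MinRpowSelf

variable {p s : ℝ}

theorem min_rpow_self_of_le_one (hs : 0 ≤ s) (hs1 : s ≤ 1) (hp1 : p ≤ 1) :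
    min (s ^ p) s = s :=
  min_eq_right (Real.self_le_rpow_of_le_one hs hs1 hp1)

theorem one_le_min_rpow_self (hs1 : 1 ≤ s) (hp0 : 0 ≤ p) : 1 ≤ min (s ^ p) s :=
  le_min (Real.one_le_rpow hs1 hp0) hs1

theorem min_rpow_self_nonneg (hs : 0 ≤ s) : 0 ≤ min (s ^ p) s :=
  le_min (Real.rpow_nonneg hs p) hs

end MinRpowSelf

theorem le_mul_min_rpow_self_mul_min_rpow_self {p K e x y : ℝ} (hp0 : 0 ≤ p) (hp1 : p ≤ 1)
    (hK : 0 ≤ K) (hx : 0 < x) (hy : 0 < y) (hex : e ≤ K * min (x ^ p) x)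
    (hey : e ≤ K * min (y ^ p) y) (hexy : e ≤ K * x * y) :
    e ≤ K * min (x ^ p) x * min (y ^ p) y := by
  have hmx := min_rpow_self_nonneg (p := p) hx.le
  have hmy := min_rpow_self_nonneg (p := p) hy.le
  rcases le_or_gt x 1 with hx1 | hx1
  · rcases le_or_gt y 1 with hy1 | hy1
    · rwa [min_rpow_self_of_le_one hx.le hx1 hp1, min_rpow_self_of_le_one hy.le hy1 hp1]
    · exact hex.trans
        (le_mul_of_one_le_right (mul_nonneg hK hmx) (one_le_min_rpow_self hy1.le hp0))
  · rw [mul_right_comm]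
    exact hey.trans
      (le_mul_of_one_le_right (mul_nonneg hK hmy) (one_le_min_rpow_self hx1.le hp0))

/-- Lemma 6.1 of the paper: if `Φ` is `C²` with `|Φ'| ≤ C`, `|Φ''| ≤ C`
and `|Φ(x) − Φ(y)| ≤ C |x−y|^p` for some `p ∈ [0,1]`, then there is `C' > 0` such that for
all `a ∈ ℝ` and `x, y > 0`,
`F(a,x,y) = |∫_0^y ∫_0^x Φ''(a+u+v) du dv| ≤ C' (x^p ∧ x)(y^p ∧ y)`. -/
theorem statement7
    {p C : ℝ} (hp0 : 0 ≤ p) (hp1 : p ≤ 1) (hC : 0 < C)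
    (Φ : ℝ → ℝ) (hΦ : ContDiff ℝ 2 Φ)
    (hd1 : ∀ x : ℝ, |deriv Φ x| ≤ C)
    (hd2 : ∀ x : ℝ, |deriv (deriv Φ) x| ≤ C)
    (hH : ∀ x y : ℝ, |Φ x - Φ y| ≤ C * |x - y| ^ p) :
    ∃ C' > (0 : ℝ), ∀ a x y : ℝ, 0 < x → 0 < y →
      |∫ v in (0 : ℝ)..y, ∫ u in (0 : ℝ)..x, deriv (deriv Φ) (a + u + v)| ≤
        C' * min (x ^ p) x * min (y ^ p) y := by
  have hΦd : Differentiable ℝ Φ := hΦ.differentiable (by norm_num)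
  refine ⟨2 * C, by positivity, fun a x y hx hy => ?_⟩
  have hxy : |∫ v in (0 : ℝ)..y, ∫ u in (0 : ℝ)..x, deriv (deriv Φ) (a + u + v)| ≤
      C * x * y := by
    simpa [abs_of_pos hx, abs_of_pos hy] using
      norm_integral_integral_le_of_norm_le_const
        (f := fun u v => deriv (deriv Φ) (a + u + v)) (fun u v => hd2 (a + u + v)) x y
  rw [integral_integral_deriv_deriv_eq_second_diff hΦ] at hxy ⊢
  have hx' := abs_sub_sub_sub_le_mul_min_rpow_self hΦd hd1 hH (a + y) a hx.le
  have hy' := abs_sub_sub_sub_le_mul_min_rpow_self hΦd hd1 hH (a + x) a hy.le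
  rw [add_right_comm a y x] at hx'
  have hswap : Φ (a + x + y) - Φ (a + x) - (Φ (a + y) - Φ a) =
      Φ (a + x + y) - Φ (a + y) - (Φ (a + x) - Φ a) := by ring
  refine le_mul_min_rpow_self_mul_min_rpow_self hp0 hp1 (by positivity) hx hy
    (hswap ▸ hx') hy' (hxy.trans ?_)
  linarith [mul_pos (mul_pos hC hx) hy]
end

section
/- Let p ∈ [0,1] and C > 0, and let Φ : ℝ → ℝ be twice continuously differentiable with Φ(0) = 0, Φ'(0) = 0, |Φ''(x)| ≤ C for all x, and |Φ(x) − Φ(y)| ≤ C|x−y|^p for all x, y. Then there exists a constant C' > 0 such that for all x, y ∈ ℝ: (i) |Φ(x) − Φ(y)| ≤ C' ( (1 ∧ |x| + 1 ∧ |y|) |x−y| 1_{{|x−y| ≤ 1}} + |x−y|^p 1_{{|x−y| > 1}} ); (ii) |Φ(x)| ≤ C' (|x|^p ∧ x²). -/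
open Set

/- For `|x - y| ≤ 1` the estimate comes from the mean value theorem, once one knows
`|Φ'(t)| ≤ 2C (1 ∧ |t|)`: the bound `C|t|` is the Lipschitz bound on `Φ'` with `Φ'(0) = 0`, and the
bound `2C` follows from the Taylor estimate `|Φ(x+1) - Φ(x) - Φ'(x)| ≤ C` together with the Hölder
bound `|Φ(x+1) - Φ(x)| ≤ C`. For `|x - y| > 1` the Hölder bound is the estimate. Part (ii) is the
Hölder bound at `y = 0` together with `|Φ(x)| ≤ 2C x²`, again by the mean value theorem. -/

lemma abs_le_max_abs_abs_of_mem_uIcc {α : Type*} [AddCommGroup α] [LinearOrder α]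
    [IsOrderedAddMonoid α] {t x y : α} (ht : t ∈ uIcc x y) : |t| ≤ max |x| |y| := by
  rcases mem_uIcc.mp ht with ⟨hxt, hty⟩ | ⟨hyt, htx⟩
  · exact abs_le_max_abs_abs hxt hty
  · exact max_comm |y| |x| ▸ abs_le_max_abs_abs hyt htx

lemma min_abs_le_add_of_mem_uIcc {c t x y : ℝ} (hc : 0 ≤ c) (ht : t ∈ uIcc x y) :
    min c |t| ≤ min c |x| + min c |y| :=
  calc min c |t| ≤ min c (max |x| |y|) := min_le_min_left c (abs_le_max_abs_abs_of_mem_uIcc ht)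
    _ = max (min c |x|) (min c |y|) := min_max_distrib_left c |x| |y|
    _ ≤ min c |x| + min c |y| :=
      max_le_add_of_nonneg (le_min hc (abs_nonneg _)) (le_min hc (abs_nonneg _))

section MeanValue

variable {f : ℝ → ℝ}

lemma abs_sub_le_mul_of_abs_deriv_le_on_uIcc (hf : Differentiable ℝ f) {x y M : ℝ}
    (hM : ∀ t ∈ uIcc x y, |deriv f t| ≤ M) : |f x - f y| ≤ M * |x - y| := by
  simpa only [Real.norm_eq_abs] using (convex_uIcc x y).norm_image_sub_le_of_norm_deriv_le
    (fun t _ => hf t) hM right_mem_uIcc left_mem_uIcc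

lemma abs_sub_le_mul_of_abs_deriv_le (hf : Differentiable ℝ f) {M : ℝ}
    (hM : ∀ t, |deriv f t| ≤ M) (x y : ℝ) : |f x - f y| ≤ M * |x - y| :=
  abs_sub_le_mul_of_abs_deriv_le_on_uIcc hf fun t _ => hM t

lemma abs_le_mul_sq_of_abs_deriv_le_mul_abs (hf : Differentiable ℝ f) (h0 : f 0 = 0) {K : ℝ}
    (hK : ∀ t, |deriv f t| ≤ K * |t|) (x : ℝ) : |f x| ≤ K * x ^ 2 := by
  have hK0 : 0 ≤ K := by simpa using (abs_nonneg _).trans (hK 1)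
  have := abs_sub_le_mul_of_abs_deriv_le_on_uIcc (x := x) (y := 0) hf (M := K * |x|)
    fun t ht => (hK t).trans <|
      mul_le_mul_of_nonneg_left (by simpa using abs_le_max_abs_abs_of_mem_uIcc ht) hK0
  rwa [h0, sub_zero, sub_zero, mul_assoc, ← sq, sq_abs] at this

lemma abs_deriv_le_add_of_lipschitz_deriv (hf : Differentiable ℝ f) {L B : ℝ}
    (hlip : ∀ s t, |deriv f s - deriv f t| ≤ L * |s - t|)
    (hstep : ∀ x, |f (x + 1) - f x| ≤ B) (x : ℝ) : |deriv f x| ≤ B + L := by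
  set g : ℝ → ℝ := fun t => f t - deriv f x * t
  have hg_deriv : ∀ t, HasDerivAt g (deriv f t - deriv f x) t := fun t =>
    ((hf t).hasDerivAt.sub ((hasDerivAt_id t).const_mul (deriv f x))).congr_deriv (by ring)
  have hg : Differentiable ℝ g := fun t => (hg_deriv t).differentiableAt
  have hL : 0 ≤ L := by simpa using (abs_nonneg _).trans (hlip (x + 1) x)
  have htaylor : |g (x + 1) - g x| ≤ L := by
    refine (abs_sub_le_mul_of_abs_deriv_le_on_uIcc hg (M := L) fun t ht => ?_).trans_eq (by simp)
    rw [(hg_deriv t).deriv]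
    have hdist : |t - x| ≤ 1 := by
      have := abs_sub_left_of_mem_uIcc (uIcc_comm x (x + 1) ▸ ht)
      rwa [add_sub_cancel_left, abs_one] at this
    simpa using (hlip t x).trans (mul_le_mul_of_nonneg_left hdist hL)
  have hdecomp : deriv f x = (f (x + 1) - f x) - (g (x + 1) - g x) := by simp only [g]; ring
  rw [hdecomp]
  calc |(f (x + 1) - f x) - (g (x + 1) - g x)| ≤ |f (x + 1) - f x| + |g (x + 1) - g x| :=
        abs_sub _ _
    _ ≤ B + L := by simpa using add_le_add (hstep x) htaylor

lemma abs_deriv_le_two_mul_min_one_abs (hf : Differentiable ℝ f)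
    (hf' : Differentiable ℝ (deriv f)) {C : ℝ} (h0' : deriv f 0 = 0)
    (hd2 : ∀ x, |deriv (deriv f) x| ≤ C) (hstep : ∀ x, |f (x + 1) - f x| ≤ C) (t : ℝ) :
    |deriv f t| ≤ 2 * C * min 1 |t| := by
  have hC : 0 ≤ C := (abs_nonneg _).trans (hd2 0)
  have hlip := abs_sub_le_mul_of_abs_deriv_le hf' hd2
  have hlin : |deriv f t| ≤ C * |t| := by simpa [h0'] using hlip t 0
  rw [mul_min_of_nonneg _ _ (by positivity), mul_one]
  have hbdd := abs_deriv_le_add_of_lipschitz_deriv hf hlip hstep t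
  exact le_min (by linarith) (hlin.trans (by nlinarith [abs_nonneg t]))

end MeanValue

theorem statement8_general
    {p C : ℝ} (hC : 0 < C)
    (Φ : ℝ → ℝ) (hΦ : ContDiff ℝ 2 Φ)
    (h0 : Φ 0 = 0) (h0' : deriv Φ 0 = 0)
    (hd2 : ∀ x : ℝ, |deriv (deriv Φ) x| ≤ C)
    (hH : ∀ x y : ℝ, |Φ x - Φ y| ≤ C * |x - y| ^ p) :
    ∃ C' > (0 : ℝ), ∀ x y : ℝ,
      (|Φ x - Φ y| ≤ C' * ((min 1 |x| + min 1 |y|) * |x - y| *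
            (if |x - y| ≤ 1 then (1 : ℝ) else 0) +
          |x - y| ^ p * (if 1 < |x - y| then (1 : ℝ) else 0))) ∧
      |Φ x| ≤ C' * min (|x| ^ p) (x ^ 2) := by
  have hΦd : Differentiable ℝ Φ := hΦ.differentiable (by norm_num)
  have hΦ'd : Differentiable ℝ (deriv Φ) :=
    (contDiff_succ_iff_deriv (n := 1).mp hΦ).2.2.differentiable (by norm_num)
  have hderiv := abs_deriv_le_two_mul_min_one_abs hΦd hΦ'd h0' hd2 fun x => by
    simpa using hH (x + 1) x
  refine ⟨2 * C, by positivity, fun x y => ⟨?_, ?_⟩⟩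
  · by_cases hxy : |x - y| ≤ 1
    · rw [if_pos hxy, if_neg (not_lt.mpr hxy), mul_one, mul_zero, add_zero, ← mul_assoc]
      refine abs_sub_le_mul_of_abs_deriv_le_on_uIcc hΦd fun t ht => (hderiv t).trans ?_
      gcongr
      exact min_abs_le_add_of_mem_uIcc zero_le_one ht
    · rw [if_neg hxy, if_pos (not_le.mp hxy), mul_zero, mul_one, zero_add]
      nlinarith [hH x y, Real.rpow_nonneg (abs_nonneg (x - y)) p]
  · have hHol : |Φ x| ≤ C * |x| ^ p := by simpa [h0] using hH x 0
    have hquad : |Φ x| ≤ 2 * C * x ^ 2 :=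
      abs_le_mul_sq_of_abs_deriv_le_mul_abs hΦd h0 (fun t => (hderiv t).trans <| by
        gcongr
        exact min_le_right _ _) x
    rw [mul_min_of_nonneg _ _ (by positivity)]
    exact le_min (hHol.trans (by nlinarith [Real.rpow_nonneg (abs_nonneg x) p])) hquad

/-- estimates (5.33)–(5.34) of the paper: if `Φ` is `C²` with
`Φ(0) = 0`, `Φ'(0) = 0`, `|Φ''| ≤ C` and `|Φ(x) − Φ(y)| ≤ C|x−y|^p`, `p ∈ [0,1]`, then
there is `C' > 0` such that for all `x, y`:
(i) `|Φ(x) − Φ(y)| ≤ C' ((1 ∧ |x| + 1 ∧ |y|)|x−y| 1_{|x−y|≤1} + |x−y|^p 1_{|x−y|>1})`;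
(ii) `|Φ(x)| ≤ C' (|x|^p ∧ x²)`. -/
theorem statement8
    {p C : ℝ} (hp0 : 0 ≤ p) (hp1 : p ≤ 1) (hC : 0 < C)
    (Φ : ℝ → ℝ) (hΦ : ContDiff ℝ 2 Φ)
    (h0 : Φ 0 = 0) (h0' : deriv Φ 0 = 0)
    (hd2 : ∀ x : ℝ, |deriv (deriv Φ) x| ≤ C)
    (hH : ∀ x y : ℝ, |Φ x - Φ y| ≤ C * |x - y| ^ p) :
    ∃ C' > (0 : ℝ), ∀ x y : ℝ,
      (|Φ x - Φ y| ≤ C' * ((min 1 |x| + min 1 |y|) * |x - y| *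
            (if |x - y| ≤ 1 then (1 : ℝ) else 0) +
          |x - y| ^ p * (if 1 < |x - y| then (1 : ℝ) else 0))) ∧
      |Φ x| ≤ C' * min (|x| ^ p) (x ^ 2) :=
  statement8_general hC Φ hΦ h0 h0' hd2 hH
end

section
/- Let β ∈ (0,2) and let g : ℝ → (0,∞) be an infinitely differentiable probability density such that for each r ∈ {0,1,2,3} there is C_r > 0 with |g^{(r)}(x)| ≤ C_r (1 ∧ |x|^{−1−β−r}) for all x ∈ ℝ. Let f : ℝ → ℝ be bounded and measurable, and define Φ(ρ,x) := ∫_ℝ f(x+ρy) g(y) dy − ∫_ℝ f(ρy) g(y) dy for ρ > 0, x ∈ ℝ. Then (ρ,x) ↦ Φ(ρ,x) is C^{1,2} on (0,∞) × ℝ (once continuously differentiable in ρ, twice in x), and for every ε ∈ (0,1) and every p ∈ [0,1] there exists C > 0 such that for all ρ ∈ [ε, ε^{-1}] and x, y ∈ ℝ: |Φ(ρ,x) − Φ(ρ,y)| ≤ C|x−y|^p, and |∂_x^j ∂_ρ^r Φ(ρ,x)| ≤ C for all j ∈ {0,1,2} and r ∈ {0,1} with j + r > 0. -/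
open MeasureTheory Set

/-- `Φ(ρ,x) = ∫ f(x+ρy) g(y) dy − ∫ f(ρy) g(y) dy`, i.e. `E[f(x+ρS)] − E[f(ρS)]` for a
random variable `S` with density `g`. -/
noncomputable def PhiFun (f g : ℝ → ℝ) (ρ x : ℝ) : ℝ :=
  (∫ y : ℝ, f (x + ρ * y) * g y) - ∫ y : ℝ, f (ρ * y) * g y

namespace S12

noncomputable def phi (β u : ℝ) : ℝ := (max 1 |u|) ^ (-1 - β)

variable {β : ℝ}

lemma one_le_base (u : ℝ) : (1:ℝ) ≤ max 1 |u| := le_max_left _ _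
lemma base_pos (u : ℝ) : (0:ℝ) < max 1 |u| := lt_of_lt_of_le one_pos (one_le_base u)

lemma phi_nonneg (u : ℝ) : 0 ≤ phi β u := Real.rpow_nonneg (base_pos u).le _

lemma phi_le_one (hβ : 0 < β) (u : ℝ) : phi β u ≤ 1 :=
  Real.rpow_le_one_of_one_le_of_nonpos (one_le_base u) (by linarith)

lemma phi_anti (hβ : 0 < β) {u v : ℝ} (h : |u| ≤ |v|) : phi β v ≤ phi β u :=
  Real.rpow_le_rpow_of_nonpos (base_pos u) (max_le_max le_rfl h) (by linarith)

lemma phi_eq_one {u : ℝ} (h : |u| ≤ 1) : phi β u = 1 := by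
  rw [phi, max_eq_left h, Real.one_rpow]

lemma phi_eq_rpow {u : ℝ} (h : 1 ≤ |u|) : phi β u = |u| ^ (-1 - β) := by
  rw [phi, max_eq_right h]

lemma phi_continuous : Continuous (phi β) :=
  (continuous_const.max continuous_abs).rpow_const (fun u => Or.inl (base_pos u).ne')

lemma phi_integrable (hβ : 0 < β) : Integrable (phi β) := by
  have h1 : IntegrableOn (phi β) (Ioi 1) := by
    have := integrableOn_Ioi_rpow_of_lt (show -1 - β < -1 by linarith) (zero_lt_one (α := ℝ))
    refine this.congr_fun (fun x hx => ?_) measurableSet_Ioi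
    rw [phi_eq_rpow (by rw [abs_of_pos (lt_trans zero_lt_one hx)]; exact (le_of_lt hx)),
      abs_of_pos (lt_trans zero_lt_one hx)]
  have h3 : IntegrableOn (phi β) (Iio (-1)) := by
    have hneg : IntegrableOn (fun x => phi β (-x)) (Ioi 1) := by
      refine h1.congr_fun (fun x _ => ?_) measurableSet_Ioi
      simp [phi, abs_neg]
    have := hneg.integrable_indicator measurableSet_Ioi
    have h4 := this.comp_neg (μ := (volume : Measure ℝ))
    have h5 : (fun x => indicator (Ioi (1:ℝ)) (fun x => phi β (-x)) (-x))
        = indicator (Iio (-1:ℝ)) (phi β) := by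
      funext x
      by_cases hx : x < -1
      · rw [indicator_of_mem (by simp only [mem_Ioi]; linarith : -x ∈ Ioi (1:ℝ)),
          indicator_of_mem (by simpa using hx), neg_neg]
      · rw [indicator_of_notMem (by simp only [mem_Ioi, not_lt]; linarith [not_lt.mp hx] : ¬ -x ∈ Ioi (1:ℝ)),
          indicator_of_notMem (by simpa using hx)]
    rw [h5] at h4
    rwa [integrable_indicator_iff measurableSet_Iio] at h4
  have h2 : IntegrableOn (phi β) (Icc (-1) 1) :=
    (phi_continuous.continuousOn).integrableOn_compact isCompact_Icc
  have huniv : IntegrableOn (phi β) univ := by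
    have : (univ : Set ℝ) = Iio (-1) ∪ (Icc (-1) 1 ∪ Ioi 1) := by
      ext x; simp only [mem_univ, mem_union, mem_Iio, mem_Icc, mem_Ioi, true_iff]
      by_cases h : x < -1
      · exact Or.inl h
      · by_cases h' : x ≤ 1
        · exact Or.inr (Or.inl ⟨le_of_not_gt h, h'⟩)
        · exact Or.inr (Or.inr (lt_of_not_ge h'))
    rw [this]
    exact h3.union (h2.union h1)
  rwa [integrableOn_univ] at huniv

lemma phi_comp_le_x (hβ : 0 < β) {ρ x₀ x : ℝ} (z : ℝ) (hρ : 0 < ρ) (hx : |x - x₀| ≤ ρ) :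
    phi β ((z - x) / ρ) ≤ phi β ((z - x₀) / (2 * ρ)) := by
  rcases le_or_gt (|z - x₀|) (2 * ρ) with h | h
  · have h1 : |(z - x₀) / (2 * ρ)| ≤ 1 := by
      rw [abs_div, abs_of_pos (by linarith : (0:ℝ) < 2 * ρ)]
      exact div_le_one_of_le₀ h (by linarith)
    rw [phi_eq_one h1]
    exact phi_le_one hβ _
  · apply phi_anti hβ
    rw [abs_div, abs_div, abs_of_pos hρ, abs_of_pos (by linarith : (0:ℝ) < 2 * ρ)]
    rw [div_le_div_iff₀ (by linarith) hρ]
    have h1 : |z - x₀| - ρ ≤ |z - x| := by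
      have h2 := abs_sub_abs_le_abs_sub (z - x₀) (x - x₀)
      have h3 : (z - x₀) - (x - x₀) = z - x := by ring
      rw [h3] at h2
      linarith
    nlinarith [abs_nonneg (z - x)]

lemma phi_comp_le_rho (hβ : 0 < β) {ρ₀ ρ : ℝ} (w : ℝ) (h0 : 0 < ρ₀) (hρ : 0 < ρ)
    (h : ρ ≤ 2 * ρ₀) : phi β (w / ρ) ≤ phi β (w / (2 * ρ₀)) := by
  apply phi_anti hβ
  rw [abs_div, abs_div, abs_of_pos hρ, abs_of_pos (by linarith : (0:ℝ) < 2 * ρ₀)]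
  exact div_le_div_of_nonneg_left (abs_nonneg w) hρ h

lemma phi_int_scaled (hβ : 0 < β) {c : ℝ} (hc : c ≠ 0) (x : ℝ) :
    Integrable (fun z => phi β ((z - x) / c)) :=
  ((phi_integrable hβ).comp_div hc).comp_sub_right x

lemma integral_phi_scaled (hβ : 0 < β) {c : ℝ} (hc : 0 < c) (x : ℝ) :
    ∫ z, phi β ((z - x) / c) = c * ∫ u, phi β u := by
  rw [show (fun z => phi β ((z - x) / c)) = fun z => (fun t => phi β (t / c)) (z - x) from rfl,
    integral_sub_right_eq_self (fun t => phi β (t / c)) x,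
    MeasureTheory.Measure.integral_comp_div (phi β) c, abs_of_pos hc, smul_eq_mul]




lemma dom_helper {β C r : ℝ} {h : ℝ → ℝ} (k : ℕ) (hb : ∀ x, |h x| ≤ C)
    (hd : ∀ x, x ≠ 0 → |h x| ≤ C * |x| ^ (-1 - β - r)) (hkr : (k : ℝ) ≤ r) (hβ : 0 < β) :
    ∀ u, |u ^ k * h u| ≤ C * phi β u := by
  intro u
  have hC : 0 ≤ C := (abs_nonneg _).trans (hb 0)
  rcases le_or_gt (|u|) 1 with h1 | h1
  · rw [phi_eq_one h1, mul_one]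
    calc |u ^ k * h u| = |u| ^ k * |h u| := by rw [abs_mul, abs_pow]
    _ ≤ 1 * C := mul_le_mul (pow_le_one₀ (abs_nonneg u) h1) (hb u) (abs_nonneg _) zero_le_one
    _ = C := one_mul C
  · have hu0 : u ≠ 0 := by
      intro h0; rw [h0, abs_zero] at h1; linarith
    have hupos : (0:ℝ) < |u| := lt_trans zero_lt_one h1
    rw [phi_eq_rpow h1.le]
    calc |u ^ k * h u| = |u| ^ (k:ℝ) * |h u| := by
          rw [abs_mul, abs_pow, Real.rpow_natCast]
    _ ≤ |u| ^ (k:ℝ) * (C * |u| ^ (-1 - β - r)) :=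
          mul_le_mul_of_nonneg_left (hd u hu0) (Real.rpow_nonneg (abs_nonneg u) _)
    _ = C * |u| ^ ((k:ℝ) + (-1 - β - r)) := by
          rw [Real.rpow_add hupos]; ring
    _ ≤ C * |u| ^ (-1 - β) :=
          mul_le_mul_of_nonneg_left
            (Real.rpow_le_rpow_of_exponent_le h1.le (by linarith)) hC

noncomputable def Jf (f G : ℝ → ℝ) (ρ x : ℝ) : ℝ := ∫ z, f z * G ((z - x) / ρ)

variable {f : ℝ → ℝ} {M : ℝ}

lemma J_aesm (hfm : Measurable f) {G : ℝ → ℝ} (hGc : Continuous G) (ρ x : ℝ) :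
    AEStronglyMeasurable (fun z => f z * G ((z - x) / ρ)) volume :=
  (hfm.mul (hGc.measurable.comp ((measurable_id.sub_const x).div_const ρ))).aestronglyMeasurable

lemma J_integrable (hβ : 0 < β) (hfm : Measurable f) (hfb : ∀ x, |f x| ≤ M)
    {G : ℝ → ℝ} {CG : ℝ} (hGc : Continuous G) (hG : ∀ u, |G u| ≤ CG * phi β u)
    {ρ : ℝ} (hρ : 0 < ρ) (x : ℝ) :
    Integrable (fun z => f z * G ((z - x) / ρ)) := by
  have hM : 0 ≤ M := (abs_nonneg _).trans (hfb 0)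
  refine Integrable.mono' (((phi_int_scaled hβ hρ.ne' x)).const_mul (M * CG))
    (J_aesm hfm hGc ρ x) ?_
  filter_upwards with z
  rw [Real.norm_eq_abs, abs_mul]
  calc |f z| * |G ((z - x) / ρ)| ≤ M * (CG * phi β ((z - x) / ρ)) :=
        mul_le_mul (hfb z) (hG _) (abs_nonneg _) hM
  _ = M * CG * phi β ((z - x) / ρ) := by ring

lemma CG_nonneg (hβ : 0 < β) {G : ℝ → ℝ} {CG : ℝ} (hG : ∀ u, |G u| ≤ CG * phi β u) :
    0 ≤ CG := by
  have h := hG 0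
  rw [phi_eq_one (by norm_num), mul_one] at h
  exact (abs_nonneg _).trans h

lemma J_bound (hβ : 0 < β) (hfm : Measurable f) (hfb : ∀ x, |f x| ≤ M)
    {G : ℝ → ℝ} {CG : ℝ} (hGc : Continuous G) (hG : ∀ u, |G u| ≤ CG * phi β u)
    {ρ : ℝ} (hρ : 0 < ρ) (x : ℝ) :
    |Jf f G ρ x| ≤ M * CG * (∫ u, phi β u) * ρ := by
  have hM : 0 ≤ M := (abs_nonneg _).trans (hfb 0)
  have h1 : |Jf f G ρ x| ≤ ∫ z, |f z| * |G ((z - x) / ρ)| := by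
    simpa [Jf, Real.norm_eq_abs, abs_mul] using
      norm_integral_le_integral_norm (μ := volume) (fun z => f z * G ((z - x) / ρ))
  refine h1.trans ?_
  have hia : Integrable (fun z => |f z| * |G ((z - x) / ρ)|) := by
    refine ((J_integrable hβ hfm hfb hGc hG hρ x).abs).congr
      (Filter.Eventually.of_forall fun z => (abs_mul _ _))
  have h2 : (∫ z, |f z| * |G ((z - x) / ρ)|) ≤ ∫ z, M * CG * phi β ((z - x) / ρ) := by
    refine integral_mono hia
      (((phi_int_scaled hβ hρ.ne' x)).const_mul (M * CG)) (fun z => ?_)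
    calc |f z| * |G ((z - x) / ρ)| ≤ M * (CG * phi β ((z - x) / ρ)) :=
          mul_le_mul (hfb z) (hG _) (abs_nonneg _) hM
    _ = M * CG * phi β ((z - x) / ρ) := by ring
  refine h2.trans ?_
  rw [integral_const_mul, integral_phi_scaled hβ hρ x]
  ring_nf
  exact le_refl _

lemma hasDerivAt_J_x (hβ : 0 < β) (hfm : Measurable f) (hfb : ∀ x, |f x| ≤ M)
    {G G' : ℝ → ℝ} {CG CG' : ℝ}
    (hGc : Continuous G) (hG'c : Continuous G')
    (hGd : ∀ u, HasDerivAt G (G' u) u)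
    (hG : ∀ u, |G u| ≤ CG * phi β u) (hG' : ∀ u, |G' u| ≤ CG' * phi β u)
    {ρ : ℝ} (hρ : 0 < ρ) (x₀ : ℝ) :
    HasDerivAt (fun x => Jf f G ρ x) (-ρ⁻¹ * Jf f G' ρ x₀) x₀ := by
  have hM : 0 ≤ M := (abs_nonneg _).trans (hfb 0)
  have hCG' : 0 ≤ CG' := CG_nonneg hβ hG'
  have hmeas : ∀ᶠ x in nhds x₀,
      AEStronglyMeasurable (fun z => f z * G ((z - x) / ρ)) volume :=
    Filter.Eventually.of_forall fun x => J_aesm hfm hGc ρ x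
  have hint : Integrable (fun z => f z * G ((z - x₀) / ρ)) :=
    J_integrable hβ hfm hfb hGc hG hρ x₀
  have hmeas' : AEStronglyMeasurable
      (fun z => f z * (G' ((z - x₀) / ρ) * (-ρ⁻¹))) volume :=
    J_aesm hfm (hG'c.mul continuous_const) ρ x₀
  have hbd : ∀ᵐ z : ℝ, ∀ x ∈ Metric.ball x₀ ρ,
      ‖f z * (G' ((z - x) / ρ) * (-ρ⁻¹))‖ ≤ M * CG' * ρ⁻¹ * phi β ((z - x₀) / (2 * ρ)) := by
    refine Filter.Eventually.of_forall fun z => fun x hx => ?_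
    have hxx : |x - x₀| ≤ ρ := by
      have := Metric.mem_ball.mp hx
      rw [Real.dist_eq] at this
      exact this.le
    have he : ‖f z * (G' ((z - x) / ρ) * (-ρ⁻¹))‖
        = |f z| * |G' ((z - x) / ρ)| * ρ⁻¹ := by
      rw [Real.norm_eq_abs, abs_mul, abs_mul, abs_neg, abs_inv, abs_of_pos hρ]; ring
    rw [he]
    calc |f z| * |G' ((z - x) / ρ)| * ρ⁻¹
        ≤ M * (CG' * phi β ((z - x) / ρ)) * ρ⁻¹ := by
          refine mul_le_mul_of_nonneg_right
            (mul_le_mul (hfb z) (hG' _) (abs_nonneg _) hM) (by positivity)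
    _ ≤ M * (CG' * phi β ((z - x₀) / (2 * ρ))) * ρ⁻¹ := by
          refine mul_le_mul_of_nonneg_right (mul_le_mul_of_nonneg_left
            (mul_le_mul_of_nonneg_left (phi_comp_le_x hβ z hρ hxx) hCG') hM) (by positivity)
    _ = M * CG' * ρ⁻¹ * phi β ((z - x₀) / (2 * ρ)) := by ring
  have hbint : Integrable (fun z => M * CG' * ρ⁻¹ * phi β ((z - x₀) / (2 * ρ))) :=
    (phi_int_scaled hβ (by positivity : (2:ℝ) * ρ ≠ 0) x₀).const_mul _
  have hdiff : ∀ᵐ z : ℝ, ∀ x ∈ Metric.ball x₀ ρ,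
      HasDerivAt (fun x => f z * G ((z - x) / ρ)) (f z * (G' ((z - x) / ρ) * (-ρ⁻¹))) x := by
    refine Filter.Eventually.of_forall fun z x _ => ?_
    have h1 : HasDerivAt (fun x => (z - x) / ρ) (-ρ⁻¹) x := by
      have := ((hasDerivAt_id x).const_sub z).div_const ρ
      simpa [neg_div, one_div] using this
    exact ((hGd _).comp x h1).const_mul (f z)
  have key := hasDerivAt_integral_of_dominated_loc_of_deriv_le (Metric.ball_mem_nhds x₀ hρ) hmeas hint hmeas' hbd
    hbint hdiff
  have h2 : (∫ z, f z * (G' ((z - x₀) / ρ) * (-ρ⁻¹))) = -ρ⁻¹ * Jf f G' ρ x₀ := by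
    rw [show (fun z => f z * (G' ((z - x₀) / ρ) * (-ρ⁻¹)))
        = fun z => -ρ⁻¹ * (f z * G' ((z - x₀) / ρ)) from funext fun z => by ring,
      integral_const_mul]
    rfl
  rw [h2] at key
  exact key.2

lemma hasDerivAt_J_rho (hβ : 0 < β) (hfm : Measurable f) (hfb : ∀ x, |f x| ≤ M)
    {G G' : ℝ → ℝ} {CG CW : ℝ}
    (hGc : Continuous G) (hG'c : Continuous G')
    (hGd : ∀ u, HasDerivAt G (G' u) u)
    (hG : ∀ u, |G u| ≤ CG * phi β u) (hW : ∀ u, |u * G' u| ≤ CW * phi β u)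
    {ρ₀ : ℝ} (hρ₀ : 0 < ρ₀) (x : ℝ) :
    HasDerivAt (fun ρ => Jf f G ρ x) (-ρ₀⁻¹ * Jf f (fun u => u * G' u) ρ₀ x) ρ₀ := by
  have hM : 0 ≤ M := (abs_nonneg _).trans (hfb 0)
  have hCW : 0 ≤ CW := CG_nonneg hβ hW
  have hmeas : ∀ᶠ ρ in nhds ρ₀,
      AEStronglyMeasurable (fun z => f z * G ((z - x) / ρ)) volume :=
    Filter.Eventually.of_forall fun ρ => J_aesm hfm hGc ρ x
  have hint : Integrable (fun z => f z * G ((z - x) / ρ₀)) :=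
    J_integrable hβ hfm hfb hGc hG hρ₀ x
  have hcont2 : Continuous (fun u : ℝ => -ρ₀⁻¹ * (u * G' u)) :=
    continuous_const.mul (continuous_id.mul hG'c)
  have hmeas' : AEStronglyMeasurable
      (fun z => f z * (-ρ₀⁻¹ * ((z - x) / ρ₀ * G' ((z - x) / ρ₀)))) volume :=
    J_aesm hfm hcont2 ρ₀ x
  have hbd : ∀ᵐ z : ℝ, ∀ ρ ∈ Metric.ball ρ₀ (ρ₀ / 2),
      ‖f z * (-ρ⁻¹ * ((z - x) / ρ * G' ((z - x) / ρ)))‖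
        ≤ M * ((ρ₀ / 2)⁻¹ * (CW * phi β ((z - x) / (2 * ρ₀)))) := by
    refine Filter.Eventually.of_forall fun z => fun ρ hρm => ?_
    have hd : |ρ - ρ₀| < ρ₀ / 2 := by
      have := Metric.mem_ball.mp hρm; rwa [Real.dist_eq] at this
    obtain ⟨hd1, hd2⟩ := abs_lt.mp hd
    have hρl : ρ₀ / 2 < ρ := by linarith
    have hρu : ρ ≤ 2 * ρ₀ := by linarith
    have hρp : 0 < ρ := by linarith
    have he : ‖f z * (-ρ⁻¹ * ((z - x) / ρ * G' ((z - x) / ρ)))‖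
        = |f z| * (ρ⁻¹ * |(z - x) / ρ * G' ((z - x) / ρ)|) := by
      rw [Real.norm_eq_abs, abs_mul, abs_mul, abs_neg, abs_inv, abs_of_pos hρp]
    rw [he]
    have hw : |(z - x) / ρ * G' ((z - x) / ρ)| ≤ CW * phi β ((z - x) / (2 * ρ₀)) :=
      (hW _).trans (mul_le_mul_of_nonneg_left (phi_comp_le_rho hβ _ hρ₀ hρp hρu) hCW)
    have hρinv : ρ⁻¹ ≤ (ρ₀ / 2)⁻¹ := by
      apply inv_anti₀ (by positivity) hρl.le
    refine mul_le_mul (hfb z) ?_ (by positivity) hM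
    exact mul_le_mul hρinv hw (abs_nonneg _) (by positivity)
  have hbint : Integrable
      (fun z => M * ((ρ₀ / 2)⁻¹ * (CW * phi β ((z - x) / (2 * ρ₀))))) := by
    have := ((phi_int_scaled hβ (by positivity : (2:ℝ) * ρ₀ ≠ 0) x).const_mul
      (M * ((ρ₀ / 2)⁻¹ * CW)))
    refine this.congr (Filter.Eventually.of_forall fun z => by ring)
  have hdiff : ∀ᵐ z : ℝ, ∀ ρ ∈ Metric.ball ρ₀ (ρ₀ / 2),
      HasDerivAt (fun ρ => f z * G ((z - x) / ρ))
        (f z * (-ρ⁻¹ * ((z - x) / ρ * G' ((z - x) / ρ)))) ρ := by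
    refine Filter.Eventually.of_forall fun z ρ hρm => ?_
    have hd : |ρ - ρ₀| < ρ₀ / 2 := by
      have := Metric.mem_ball.mp hρm; rwa [Real.dist_eq] at this
    obtain ⟨hd1, hd2⟩ := abs_lt.mp hd
    have hρp : 0 < ρ := by linarith
    have h1 : HasDerivAt (fun ρ : ℝ => (z - x) / ρ) ((z - x) * -(ρ ^ 2)⁻¹) ρ := by
      simpa [div_eq_mul_inv] using (hasDerivAt_inv hρp.ne').const_mul (z - x)
    have h2 := ((hGd ((z - x) / ρ)).comp ρ h1).const_mul (f z)
    exact h2.congr_deriv (by ring)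
  have key := hasDerivAt_integral_of_dominated_loc_of_deriv_le (Metric.ball_mem_nhds ρ₀ (by positivity : 0 < ρ₀ / 2))
    hmeas hint (by exact hmeas'.congr (Filter.Eventually.of_forall fun z => rfl)) hbd hbint hdiff
  have h2 : (∫ z, f z * (-ρ₀⁻¹ * ((z - x) / ρ₀ * G' ((z - x) / ρ₀))))
      = -ρ₀⁻¹ * Jf f (fun u => u * G' u) ρ₀ x := by
    rw [show (fun z => f z * (-ρ₀⁻¹ * ((z - x) / ρ₀ * G' ((z - x) / ρ₀))))
        = fun z => -ρ₀⁻¹ * (f z * ((z - x) / ρ₀ * G' ((z - x) / ρ₀))) from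
        funext fun z => by ring, integral_const_mul]
    rfl
  rw [h2] at key
  exact key.2

lemma Phi_eq (f g : ℝ → ℝ) {ρ : ℝ} (hρ : 0 < ρ) (x : ℝ) :
    PhiFun f g ρ x = ρ⁻¹ * Jf f g ρ x - ρ⁻¹ * Jf f g ρ 0 := by
  have key : ∀ a : ℝ, (∫ y : ℝ, f (a + ρ * y) * g y) = ρ⁻¹ * Jf f g ρ a := by
    intro a
    have h4 := integral_add_left_eq_self (μ := volume) (fun z => f z * g ((z - a) / ρ)) a
    have h3 : (∫ t : ℝ, f (a + t) * g (t / ρ)) = Jf f g ρ a := by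
      rw [Jf, ← h4]
      refine integral_congr_ae (Filter.Eventually.of_forall fun t => ?_)
      show f (a + t) * g (t / ρ) = f (a + t) * g ((a + t - a) / ρ)
      rw [add_sub_cancel_left]
    have h2 : (∫ y : ℝ, (fun t => f (a + t) * g (t / ρ)) (ρ * y))
        = |ρ⁻¹| • ∫ t : ℝ, f (a + t) * g (t / ρ) :=
      MeasureTheory.Measure.integral_comp_mul_left (fun t => f (a + t) * g (t / ρ)) ρ
    calc (∫ y : ℝ, f (a + ρ * y) * g y)
        = ∫ y : ℝ, (fun t => f (a + t) * g (t / ρ)) (ρ * y) := by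
          refine integral_congr_ae (Filter.Eventually.of_forall fun y => ?_)
          show f (a + ρ * y) * g y = f (a + ρ * y) * g (ρ * y / ρ)
          rw [mul_div_cancel_left₀ _ hρ.ne']
    _ = |ρ⁻¹| • ∫ t : ℝ, f (a + t) * g (t / ρ) := h2
    _ = ρ⁻¹ * Jf f g ρ a := by
          rw [h3, abs_of_pos (by positivity : (0:ℝ) < ρ⁻¹), smul_eq_mul]
  have h1 := key x
  have h0 := key 0
  simp only [zero_add] at h0
  rw [PhiFun, h1, ← h0]

end S12

open S12
open scoped ContDiff

set_option maxHeartbeats 2000000 in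
/-- Remark 2.3(i) of the paper: let `g` be a smooth, everywhere positive
probability density whose derivatives up to order 3 satisfy
`|g^{(r)}(x)| ≤ C_r (1 ∧ |x|^{−1−β−r})`, and let `f` be bounded and measurable. Then
`Φ(ρ,x) = E[f(x+ρS)] − E[f(ρS)]` is `C^{1,2}` on `(0,∞) × ℝ` (twice continuously
differentiable in `x`, once in `ρ`), and for every `ε ∈ (0,1)` and `p ∈ [0,1]` there is
`C > 0` such that for all `ρ ∈ [ε, ε⁻¹]`: `|Φ(ρ,x) − Φ(ρ,y)| ≤ C|x−y|^p` and all partial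
derivatives `∂_x^j ∂_ρ^r Φ` with `j ≤ 2`, `r ≤ 1`, `j+r > 0` are bounded by `C`. -/
theorem statement12
    {β : ℝ} (hβ0 : 0 < β) (hβ2 : β < 2)
    (g : ℝ → ℝ) (hgpos : ∀ x, 0 < g x) (hgsmooth : ContDiff ℝ (⊤ : ℕ∞) g)
    (hgdens : ∫ x : ℝ, g x = 1)
    (hgdecay : ∀ r : ℕ, r ≤ 3 → ∃ Cr > (0 : ℝ),
      (∀ x : ℝ, |iteratedDeriv r g x| ≤ Cr) ∧
      (∀ x : ℝ, x ≠ 0 → |iteratedDeriv r g x| ≤ Cr * |x| ^ (-1 - β - (r : ℝ))))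
    (f : ℝ → ℝ) (hfm : Measurable f) {M : ℝ} (hfb : ∀ x : ℝ, |f x| ≤ M) :
    (∀ ρ > (0 : ℝ), ContDiff ℝ 2 (PhiFun f g ρ)) ∧
    (∀ x : ℝ, ContDiffOn ℝ 1 (fun ρ => PhiFun f g ρ x) (Set.Ioi (0 : ℝ))) ∧
    (∀ ε ∈ Set.Ioo (0 : ℝ) 1, ∀ p ∈ Set.Icc (0 : ℝ) 1, ∃ C > (0 : ℝ),
      ∀ ρ ∈ Set.Icc ε ε⁻¹,
        (∀ x y : ℝ, |PhiFun f g ρ x - PhiFun f g ρ y| ≤ C * |x - y| ^ p) ∧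
        (∀ x : ℝ,
          |deriv (PhiFun f g ρ) x| ≤ C ∧
          |deriv (deriv (PhiFun f g ρ)) x| ≤ C ∧
          |deriv (fun r => PhiFun f g r x) ρ| ≤ C ∧
          |deriv (fun x' => deriv (fun r => PhiFun f g r x') ρ) x| ≤ C ∧
          |deriv (deriv (fun x' => deriv (fun r => PhiFun f g r x') ρ)) x| ≤ C)) := by
  have hM : 0 ≤ M := (abs_nonneg _).trans (hfb 0)
  have h0 : ContDiff ℝ (∞ : WithTop ℕ∞) g := hgsmooth.of_le (by simp)
  have h1 : ContDiff ℝ (∞ : WithTop ℕ∞) (deriv g) := (contDiff_infty_iff_deriv.mp h0).2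
  have h2 : ContDiff ℝ (∞ : WithTop ℕ∞) (deriv (deriv g)) := (contDiff_infty_iff_deriv.mp h1).2
  have h3 : ContDiff ℝ (∞ : WithTop ℕ∞) (deriv (deriv (deriv g))) := (contDiff_infty_iff_deriv.mp h2).2
  have hcg : Continuous g := h0.continuous
  have hcg1 : Continuous (deriv g) := h1.continuous
  have hcg2 : Continuous (deriv (deriv g)) := h2.continuous
  have hcg3 : Continuous (deriv (deriv (deriv g))) := h3.continuous
  have hdg : ∀ u, HasDerivAt g ((deriv g) u) u :=
    fun u => ((contDiff_infty_iff_deriv.mp h0).1 u).hasDerivAt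
  have hdg1 : ∀ u, HasDerivAt (deriv g) ((deriv (deriv g)) u) u :=
    fun u => ((contDiff_infty_iff_deriv.mp h1).1 u).hasDerivAt
  have hdg2 : ∀ u, HasDerivAt (deriv (deriv g)) ((deriv (deriv (deriv g))) u) u :=
    fun u => ((contDiff_infty_iff_deriv.mp h2).1 u).hasDerivAt
  obtain ⟨C0, hC0p, hC0b, hC0d⟩ := hgdecay 0 (by norm_num)
  obtain ⟨C1, hC1p, hC1b, hC1d⟩ := hgdecay 1 (by norm_num)
  obtain ⟨C2, hC2p, hC2b, hC2d⟩ := hgdecay 2 (by norm_num)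
  obtain ⟨C3, hC3p, hC3b, hC3d⟩ := hgdecay 3 (by norm_num)
  have e2 : iteratedDeriv 2 g = (deriv (deriv g)) := by
    rw [show (2:ℕ) = 1+1 from rfl, iteratedDeriv_succ, iteratedDeriv_one]
  have e3 : iteratedDeriv 3 g = (deriv (deriv (deriv g))) := by
    rw [show (3:ℕ) = 2+1 from rfl, iteratedDeriv_succ, e2]
  simp only [iteratedDeriv_zero] at hC0b hC0d
  simp only [iteratedDeriv_one] at hC1b hC1d
  simp only [e2] at hC2b hC2d
  simp only [e3] at hC3b hC3d
  have hDom0 : ∀ u, |g u| ≤ C0 * phi β u := by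
    have := dom_helper (β := β) 0 hC0b hC0d (by norm_num) hβ0
    simpa using this
  have hDom1 : ∀ u, |(deriv g) u| ≤ C1 * phi β u := by
    have := dom_helper (β := β) 0 hC1b hC1d (by norm_num) hβ0
    simpa using this
  have hDom2 : ∀ u, |(deriv (deriv g)) u| ≤ C2 * phi β u := by
    have := dom_helper (β := β) 0 hC2b hC2d (by norm_num) hβ0
    simpa using this
  have hDom3 : ∀ u, |(deriv (deriv (deriv g))) u| ≤ C3 * phi β u := by
    have := dom_helper (β := β) 0 hC3b hC3d (by norm_num) hβ0
    simpa using this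
  have hWd1 : ∀ u, |u * (deriv g) u| ≤ C1 * phi β u := by
    have := dom_helper (β := β) 1 hC1b hC1d (by norm_num) hβ0
    simpa using this
  have hWd2 : ∀ u, |u * (deriv (deriv g)) u| ≤ C2 * phi β u := by
    have := dom_helper (β := β) 1 hC2b hC2d (by norm_num) hβ0
    simpa using this
  have hWd3 : ∀ u, |u * (deriv (deriv (deriv g))) u| ≤ C3 * phi β u := by
    have := dom_helper (β := β) 1 hC3b hC3d (by norm_num) hβ0
    simpa using this
  have hUd2 : ∀ u, |u^2 * (deriv (deriv g)) u| ≤ C2 * phi β u :=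
    dom_helper (β := β) 2 hC2b hC2d (by norm_num) hβ0
  -- W functions
  have hcW1 : Continuous (fun u => u * (deriv g) u) := continuous_id.mul hcg1
  have hcW1p : Continuous (fun u => (deriv g) u + u * (deriv (deriv g)) u) := hcg1.add (continuous_id.mul hcg2)
  have hcW1pp : Continuous (fun u => 2 * (deriv (deriv g)) u + u * (deriv (deriv (deriv g))) u) := (continuous_const.mul hcg2).add (continuous_id.mul hcg3)
  have hdW1 : ∀ u, HasDerivAt (fun u => u * (deriv g) u) ((fun u => (deriv g) u + u * (deriv (deriv g)) u) u) u := by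
    intro u
    have h := (hasDerivAt_id' u).mul (hdg1 u)
    simpa [Pi.mul_def] using h
  have hdW1p : ∀ u, HasDerivAt (fun u => (deriv g) u + u * (deriv (deriv g)) u) ((fun u => 2 * (deriv (deriv g)) u + u * (deriv (deriv (deriv g))) u) u) u := by
    intro u
    have h := (hdg1 u).add ((hasDerivAt_id u).mul (hdg2 u))
    simp only [one_mul, id_eq, Pi.mul_apply] at h
    exact h.congr_deriv (by beta_reduce; ring)
  have hDomW1p : ∀ u, |(fun u => (deriv g) u + u * (deriv (deriv g)) u) u| ≤ (C1 + C2) * phi β u := by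
    intro u
    calc |(deriv g) u + u * (deriv (deriv g)) u| ≤ |(deriv g) u| + |u * (deriv (deriv g)) u| := abs_add_le _ _
    _ ≤ C1 * phi β u + C2 * phi β u := add_le_add (hDom1 u) (hWd2 u)
    _ = (C1 + C2) * phi β u := by ring
  have hDomW1pp : ∀ u, |(fun u => 2 * (deriv (deriv g)) u + u * (deriv (deriv (deriv g))) u) u| ≤ (2*C2 + C3) * phi β u := by
    intro u
    calc |2 * (deriv (deriv g)) u + u * (deriv (deriv (deriv g))) u| ≤ |2 * (deriv (deriv g)) u| + |u * (deriv (deriv (deriv g))) u| := abs_add_le _ _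
    _ ≤ 2 * (C2 * phi β u) + C3 * phi β u := by
        refine add_le_add ?_ (hWd3 u)
        rw [abs_mul, abs_two]
        exact mul_le_mul_of_nonneg_left (hDom2 u) (by norm_num)
    _ = (2*C2 + C3) * phi β u := by ring
  have hDomIdW1p : ∀ u, |u * (fun u => (deriv g) u + u * (deriv (deriv g)) u) u| ≤ (C1 + C2) * phi β u := by
    intro u
    have e : u * ((deriv g) u + u * (deriv (deriv g)) u) = u * (deriv g) u + u^2 * (deriv (deriv g)) u := by ring
    calc |u * ((deriv g) u + u * (deriv (deriv g)) u)| = |u * (deriv g) u + u^2 * (deriv (deriv g)) u| := by rw [e]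
    _ ≤ |u * (deriv g) u| + |u^2 * (deriv (deriv g)) u| := abs_add_le _ _
    _ ≤ C1 * phi β u + C2 * phi β u := add_le_add (hWd1 u) (hUd2 u)
    _ = (C1 + C2) * phi β u := by ring
  -- J derivative lemmas
  have hJx_g : ∀ {ρ : ℝ}, 0 < ρ → ∀ x₀ : ℝ,
      HasDerivAt (fun x => Jf f g ρ x) (-ρ⁻¹ * Jf f (deriv g) ρ x₀) x₀ :=
    fun hρ x₀ => hasDerivAt_J_x hβ0 hfm hfb hcg hcg1 hdg hDom0 hDom1 hρ x₀
  have hJx_g1 : ∀ {ρ : ℝ}, 0 < ρ → ∀ x₀ : ℝ,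
      HasDerivAt (fun x => Jf f (deriv g) ρ x) (-ρ⁻¹ * Jf f (deriv (deriv g)) ρ x₀) x₀ :=
    fun hρ x₀ => hasDerivAt_J_x hβ0 hfm hfb hcg1 hcg2 hdg1 hDom1 hDom2 hρ x₀
  have hJx_g2 : ∀ {ρ : ℝ}, 0 < ρ → ∀ x₀ : ℝ,
      HasDerivAt (fun x => Jf f (deriv (deriv g)) ρ x) (-ρ⁻¹ * Jf f (deriv (deriv (deriv g))) ρ x₀) x₀ :=
    fun hρ x₀ => hasDerivAt_J_x hβ0 hfm hfb hcg2 hcg3 hdg2 hDom2 hDom3 hρ x₀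
  have hJx_W1 : ∀ {ρ : ℝ}, 0 < ρ → ∀ x₀ : ℝ,
      HasDerivAt (fun x => Jf f (fun u => u * (deriv g) u) ρ x) (-ρ⁻¹ * Jf f (fun u => (deriv g) u + u * (deriv (deriv g)) u) ρ x₀) x₀ :=
    fun hρ x₀ => hasDerivAt_J_x hβ0 hfm hfb hcW1 hcW1p hdW1 hWd1 hDomW1p hρ x₀
  have hJx_W1p : ∀ {ρ : ℝ}, 0 < ρ → ∀ x₀ : ℝ,
      HasDerivAt (fun x => Jf f (fun u => (deriv g) u + u * (deriv (deriv g)) u) ρ x) (-ρ⁻¹ * Jf f (fun u => 2 * (deriv (deriv g)) u + u * (deriv (deriv (deriv g))) u) ρ x₀) x₀ :=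
    fun hρ x₀ => hasDerivAt_J_x hβ0 hfm hfb hcW1p hcW1pp hdW1p hDomW1p hDomW1pp hρ x₀
  have hJρ_g : ∀ {ρ : ℝ}, 0 < ρ → ∀ x : ℝ,
      HasDerivAt (fun r => Jf f g r x) (-ρ⁻¹ * Jf f (fun u => u * (deriv g) u) ρ x) ρ :=
    fun hρ x => hasDerivAt_J_rho hβ0 hfm hfb hcg hcg1 hdg hDom0 hWd1 hρ x
  have hJρ_W1 : ∀ {ρ : ℝ}, 0 < ρ → ∀ x : ℝ,
      HasDerivAt (fun r => Jf f (fun u => u * (deriv g) u) r x) (-ρ⁻¹ * Jf f (fun u => u * (fun u => (deriv g) u + u * (deriv (deriv g)) u) u) ρ x) ρ :=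
    fun hρ x => hasDerivAt_J_rho hβ0 hfm hfb hcW1 hcW1p hdW1 hWd1 hDomIdW1p hρ x
  -- x-derivative formulas for PhiFun
  have hPhiX : ∀ (ρ : ℝ), 0 < ρ → ∀ x : ℝ,
      HasDerivAt (PhiFun f g ρ) (ρ⁻¹ * (-ρ⁻¹ * Jf f (deriv g) ρ x)) x := by
    intro ρ hρ x
    have hfun : PhiFun f g ρ = fun x => ρ⁻¹ * Jf f g ρ x - ρ⁻¹ * Jf f g ρ 0 :=
      funext fun x => Phi_eq f g hρ x
    rw [hfun]
    exact ((hJx_g hρ x).const_mul ρ⁻¹).sub_const _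
  have hPhiX' : ∀ (ρ : ℝ), 0 < ρ →
      deriv (PhiFun f g ρ) = fun x => ρ⁻¹ * (-ρ⁻¹ * Jf f (deriv g) ρ x) :=
    fun ρ hρ => funext fun x => (hPhiX ρ hρ x).deriv
  have hPhiXX : ∀ (ρ : ℝ), 0 < ρ → ∀ x : ℝ,
      HasDerivAt (fun x => ρ⁻¹ * (-ρ⁻¹ * Jf f (deriv g) ρ x))
        (ρ⁻¹ * (-ρ⁻¹ * (-ρ⁻¹ * Jf f (deriv (deriv g)) ρ x))) x :=
    fun ρ hρ x => ((hJx_g1 hρ x).const_mul (-ρ⁻¹)).const_mul ρ⁻¹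
  have hPhiXX' : ∀ (ρ : ℝ), 0 < ρ →
      deriv (deriv (PhiFun f g ρ)) = fun x => ρ⁻¹ * (-ρ⁻¹ * (-ρ⁻¹ * Jf f (deriv (deriv g)) ρ x)) := by
    intro ρ hρ
    rw [hPhiX' ρ hρ]
    exact funext fun x => (hPhiXX ρ hρ x).deriv
  have hPhiXXX : ∀ (ρ : ℝ), 0 < ρ → ∀ x : ℝ,
      HasDerivAt (fun x => ρ⁻¹ * (-ρ⁻¹ * (-ρ⁻¹ * Jf f (deriv (deriv g)) ρ x)))
        (ρ⁻¹ * (-ρ⁻¹ * (-ρ⁻¹ * (-ρ⁻¹ * Jf f (deriv (deriv (deriv g))) ρ x)))) x :=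
    fun ρ hρ x => (((hJx_g2 hρ x).const_mul (-ρ⁻¹)).const_mul (-ρ⁻¹)).const_mul ρ⁻¹
  have part1 : ∀ ρ > (0:ℝ), ContDiff ℝ 2 (PhiFun f g ρ) := by
    intro ρ hρ
    rw [← (one_add_one_eq_two : (1 : WithTop ℕ∞) + 1 = 2), contDiff_succ_iff_deriv]
    refine ⟨fun x => (hPhiX ρ hρ x).differentiableAt, by simp, ?_⟩
    rw [hPhiX' ρ hρ, contDiff_one_iff_deriv]
    refine ⟨fun x => (hPhiXX ρ hρ x).differentiableAt, ?_⟩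
    rw [show deriv (fun x => ρ⁻¹ * (-ρ⁻¹ * Jf f (deriv g) ρ x))
        = fun x => ρ⁻¹ * (-ρ⁻¹ * (-ρ⁻¹ * Jf f (deriv (deriv g)) ρ x)) from
        funext fun x => (hPhiXX ρ hρ x).deriv]
    have hdiff : Differentiable ℝ (fun x => ρ⁻¹ * (-ρ⁻¹ * (-ρ⁻¹ * Jf f (deriv (deriv g)) ρ x))) :=
      fun x => (hPhiXXX ρ hρ x).differentiableAt
    exact hdiff.continuous
  -- rho-derivative formulas
  have hDρ : ∀ (x ρ : ℝ), 0 < ρ →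
      HasDerivAt (fun r => PhiFun f g r x) ((-(ρ^2)⁻¹ * Jf f g ρ x + ρ⁻¹ * (-ρ⁻¹ * Jf f (fun u => u * (deriv g) u) ρ x)) - (-(ρ^2)⁻¹ * Jf f g ρ 0 + ρ⁻¹ * (-ρ⁻¹ * Jf f (fun u => u * (deriv g) u) ρ 0))) ρ := by
    intro x ρ hρ
    have hx : HasDerivAt (fun r => r⁻¹ * Jf f g r x)
        (-(ρ^2)⁻¹ * Jf f g ρ x + ρ⁻¹ * (-ρ⁻¹ * Jf f (fun u => u * (deriv g) u) ρ x)) ρ :=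
      (hasDerivAt_inv hρ.ne').mul (hJρ_g hρ x)
    have h0' : HasDerivAt (fun r => r⁻¹ * Jf f g r 0)
        (-(ρ^2)⁻¹ * Jf f g ρ 0 + ρ⁻¹ * (-ρ⁻¹ * Jf f (fun u => u * (deriv g) u) ρ 0)) ρ :=
      (hasDerivAt_inv hρ.ne').mul (hJρ_g hρ 0)
    have hev : (fun r => PhiFun f g r x)
        =ᶠ[nhds ρ] (fun r => r⁻¹ * Jf f g r x - r⁻¹ * Jf f g r 0) := by
      filter_upwards [Ioi_mem_nhds hρ] with r hr
      exact Phi_eq f g hr x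
    exact (hx.sub h0').congr_of_eventuallyEq hev
  have hDρ' : ∀ (x ρ : ℝ), 0 < ρ →
      deriv (fun r => PhiFun f g r x) ρ = (-(ρ^2)⁻¹ * Jf f g ρ x + ρ⁻¹ * (-ρ⁻¹ * Jf f (fun u => u * (deriv g) u) ρ x)) - (-(ρ^2)⁻¹ * Jf f g ρ 0 + ρ⁻¹ * (-ρ⁻¹ * Jf f (fun u => u * (deriv g) u) ρ 0)) :=
    fun x ρ hρ => (hDρ x ρ hρ).deriv
  have part2 : ∀ x : ℝ, ContDiffOn ℝ 1 (fun ρ => PhiFun f g ρ x) (Set.Ioi (0:ℝ)) := by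
    intro x
    rw [← zero_add (1 : WithTop ℕ∞), contDiffOn_succ_iff_deriv_of_isOpen isOpen_Ioi]
    refine ⟨fun ρ hρ => (hDρ x ρ hρ).differentiableAt.differentiableWithinAt, by simp, ?_⟩
    rw [contDiffOn_zero]
    have hJcx : ContinuousOn (fun ρ => Jf f g ρ x) (Set.Ioi (0:ℝ)) :=
      fun ρ hρ => ((hJρ_g hρ x).continuousAt).continuousWithinAt
    have hJc0 : ContinuousOn (fun ρ => Jf f g ρ 0) (Set.Ioi (0:ℝ)) :=
      fun ρ hρ => ((hJρ_g hρ 0).continuousAt).continuousWithinAt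
    have hWcx : ContinuousOn (fun ρ => Jf f (fun u => u * (deriv g) u) ρ x) (Set.Ioi (0:ℝ)) :=
      fun ρ hρ => ((hJρ_W1 hρ x).continuousAt).continuousWithinAt
    have hWc0 : ContinuousOn (fun ρ => Jf f (fun u => u * (deriv g) u) ρ 0) (Set.Ioi (0:ℝ)) :=
      fun ρ hρ => ((hJρ_W1 hρ 0).continuousAt).continuousWithinAt
    have hinv : ContinuousOn (fun ρ : ℝ => ρ⁻¹) (Set.Ioi (0:ℝ)) :=
      ContinuousOn.inv₀ continuousOn_id (fun ρ hρ => ne_of_gt hρ)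
    have hinv2 : ContinuousOn (fun ρ : ℝ => -(ρ^2)⁻¹) (Set.Ioi (0:ℝ)) :=
      (ContinuousOn.inv₀ (continuousOn_pow 2)
        (fun ρ hρ => by have : (0:ℝ) < ρ := hρ; positivity)).neg
    have hc : ContinuousOn (fun ρ => (-(ρ^2)⁻¹ * Jf f g ρ x + ρ⁻¹ * (-ρ⁻¹ * Jf f (fun u => u * (deriv g) u) ρ x)) - (-(ρ^2)⁻¹ * Jf f g ρ 0 + ρ⁻¹ * (-ρ⁻¹ * Jf f (fun u => u * (deriv g) u) ρ 0))) (Set.Ioi (0:ℝ)) :=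
      ((hinv2.mul hJcx).add (hinv.mul (hinv.neg.mul hWcx))).sub
        ((hinv2.mul hJc0).add (hinv.mul (hinv.neg.mul hWc0)))
    exact hc.congr (fun ρ hρ => hDρ' x ρ hρ)
  -- global bound on PhiFun
  have hgint : Integrable g := by
    by_contra hni
    rw [integral_undef hni] at hgdens
    norm_num at hgdens
  have hPhiBound : ∀ (ρ' x' : ℝ), 0 < ρ' → |PhiFun f g ρ' x'| ≤ 2*M := by
    intro ρ' x' hρ'
    have hkey : ∀ a : ℝ, |∫ y : ℝ, f (a + ρ' * y) * g y| ≤ M := by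
      intro a
      have hmeasint : AEStronglyMeasurable (fun y => f (a + ρ' * y) * g y) volume :=
        ((hfm.comp ((measurable_id.const_mul ρ').const_add a)).mul
          hcg.measurable).aestronglyMeasurable
      have hint : Integrable (fun y => f (a + ρ' * y) * g y) := by
        refine Integrable.mono' (hgint.const_mul M) hmeasint ?_
        filter_upwards with y
        rw [Real.norm_eq_abs, abs_mul, abs_of_pos (hgpos y)]
        exact mul_le_mul_of_nonneg_right (hfb _) (hgpos y).le
      have hn : |∫ y : ℝ, f (a + ρ' * y) * g y| ≤ ∫ y : ℝ, |f (a + ρ' * y)| * g y := by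
        have h := norm_integral_le_integral_norm (μ := volume)
          (fun y => f (a + ρ' * y) * g y)
        simp only [Real.norm_eq_abs, abs_mul] at h
        refine h.trans (le_of_eq (integral_congr_ae (Filter.Eventually.of_forall fun y => ?_)))
        show |f (a + ρ' * y)| * |g y| = |f (a + ρ' * y)| * g y
        rw [abs_of_pos (hgpos y)]
      refine hn.trans ?_
      have hint2 : Integrable (fun y => |f (a + ρ' * y)| * g y) := by
        refine hint.abs.congr (Filter.Eventually.of_forall fun y => ?_)
        show |f (a + ρ' * y) * g y| = |f (a + ρ' * y)| * g y
        rw [abs_mul, abs_of_pos (hgpos y)]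
      calc (∫ y : ℝ, |f (a + ρ' * y)| * g y) ≤ ∫ y : ℝ, M * g y := by
            refine integral_mono hint2 (hgint.const_mul M) (fun y => ?_)
            exact mul_le_mul_of_nonneg_right (hfb _) (hgpos y).le
      _ = M := by rw [integral_const_mul, hgdens, mul_one]
    have h0' := hkey 0
    simp only [zero_add] at h0'
    calc |PhiFun f g ρ' x'| ≤ |∫ y : ℝ, f (x' + ρ' * y) * g y| + |∫ y : ℝ, f (ρ' * y) * g y| :=
          abs_sub _ _
    _ ≤ M + M := add_le_add (hkey x') h0'
    _ = 2*M := by ring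
  refine ⟨part1, part2, ?_⟩
  intro ε hε p hp
  obtain ⟨hε0, hε1⟩ := hε
  have hεinv : (1:ℝ) ≤ ε⁻¹ := (one_le_inv₀ hε0).mpr hε1.le
  have hIφ0 : 0 ≤ ∫ u, phi β u := integral_nonneg (fun u => phi_nonneg u)
  set Iφ := ∫ u, phi β u with hIφdef
  set T := ε⁻¹ ^ 3 with hTdef
  have hT0 : 0 ≤ T := by positivity
  have hT1 : ε⁻¹ ≤ T := by
    rw [hTdef]
    nlinarith [hεinv, inv_pos.mpr hε0, sq_nonneg (ε⁻¹ - 1), sq_nonneg ε⁻¹]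
  have hT2 : ε⁻¹ * ε⁻¹ ≤ T := by
    rw [hTdef]
    nlinarith [hεinv, inv_pos.mpr hε0, sq_nonneg (ε⁻¹ - 1), sq_nonneg ε⁻¹]
  have hT3 : ε⁻¹ * ε⁻¹ * ε⁻¹ ≤ T := by rw [hTdef]; ring_nf; exact le_rfl
  have hS0 : 0 ≤ C0 + C1 + C2 + C3 := by linarith
  set C := 1 + 4*M + 8*M*Iφ*(C0 + C1 + C2 + C3)*T with hCdef
  have hC8 : 0 ≤ 8*M*Iφ*(C0 + C1 + C2 + C3)*T := by
    have := mul_nonneg (mul_nonneg (mul_nonneg (mul_nonneg (by norm_num : (0:ℝ) ≤ 8) hM) hIφ0) hS0) hT0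
    linarith [this]
  have hCpos : 0 < C := by rw [hCdef]; linarith
  have key3 : ∀ c : ℝ, 0 ≤ c → c ≤ 8*(C0 + C1 + C2 + C3) → ∀ k : ℝ, 0 ≤ k → k ≤ T →
      M * c * Iφ * k ≤ C := by
    intro c hc0 hc8 k hk0 hkT
    have h1' : M * c * Iφ * k ≤ M * (8*(C0 + C1 + C2 + C3)) * Iφ * T := by gcongr
    have h2' : M * (8*(C0 + C1 + C2 + C3)) * Iφ * T = 8*M*Iφ*(C0 + C1 + C2 + C3)*T := by ring
    rw [hCdef]
    linarith
  refine ⟨C, hCpos, ?_⟩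
  intro ρ hρmem
  obtain ⟨hρε, hρεinv⟩ := hρmem
  have hρ : 0 < ρ := lt_of_lt_of_le hε0 hρε
  have hρinv : ρ⁻¹ ≤ ε⁻¹ := by
    apply inv_anti₀ hε0 hρε
  have hρinv0 : (0:ℝ) ≤ ρ⁻¹ := by positivity
  have hk1T : ρ⁻¹ ≤ T := hρinv.trans hT1
  have hk2T : ρ⁻¹ * ρ⁻¹ ≤ T := (mul_le_mul hρinv hρinv hρinv0 (by positivity)).trans hT2
  have hk3T : ρ⁻¹ * ρ⁻¹ * ρ⁻¹ ≤ T :=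
    (mul_le_mul (mul_le_mul hρinv hρinv hρinv0 (by positivity)) hρinv hρinv0
      (by positivity)).trans hT3
  have hJb : ∀ (G : ℝ → ℝ) (CG : ℝ), Continuous G → (∀ u, |G u| ≤ CG * phi β u) →
      ∀ y : ℝ, |Jf f G ρ y| ≤ M * CG * Iφ * ρ := by
    intro G CG hc hdom y
    have := J_bound hβ0 hfm hfb hc hdom hρ y
    rw [hIφdef]
    linarith [this]
  -- bound b1 reusable
  have hb1 : ∀ y : ℝ, |ρ⁻¹ * (-ρ⁻¹ * Jf f (deriv g) ρ y)| ≤ M * C1 * Iφ * ρ⁻¹ := by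
    intro y
    have e : |ρ⁻¹ * (-ρ⁻¹ * Jf f (deriv g) ρ y)| = ρ⁻¹ * (ρ⁻¹ * |Jf f (deriv g) ρ y|) := by
      simp only [abs_mul, abs_neg, abs_inv, abs_of_pos hρ]
    rw [e]
    have h5 : ρ⁻¹ * (ρ⁻¹ * |Jf f (deriv g) ρ y|) ≤ ρ⁻¹ * (ρ⁻¹ * (M * C1 * Iφ * ρ)) := by
      have := hJb (deriv g) C1 hcg1 hDom1 y
      gcongr
    refine h5.trans (le_of_eq ?_)
    field_simp
    try ring
    try exact Or.inl trivial
    try exact Or.inl (Or.inl trivial)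
  constructor
  · -- Hoelder bound
    intro x y
    rcases eq_or_ne x y with rfl | hxy
    · simp only [sub_self, abs_zero]
      positivity
    · have hd : 0 < |x - y| := abs_pos.mpr (sub_ne_zero.mpr hxy)
      rcases le_or_gt (|x - y|) 1 with hle | hgt
      · have hL : ∀ z : ℝ, ‖ρ⁻¹ * (-ρ⁻¹ * Jf f (deriv g) ρ z)‖ ≤ M * C1 * Iφ * ε⁻¹ := by
          intro z
          rw [Real.norm_eq_abs]
          refine (hb1 z).trans ?_
          have hMC1 : 0 ≤ M * C1 * Iφ := by positivity
          gcongr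
        have hLip : ‖PhiFun f g ρ x - PhiFun f g ρ y‖ ≤ (M * C1 * Iφ * ε⁻¹) * ‖x - y‖ :=
          Convex.norm_image_sub_le_of_norm_hasDerivWithin_le
            (fun z _ => (hPhiX ρ hρ z).hasDerivWithinAt) (fun z _ => hL z)
            convex_univ (mem_univ y) (mem_univ x)
        have hbase : |x - y| ≤ |x - y| ^ p := by
          have h := Real.rpow_le_rpow_of_exponent_ge hd hle hp.2
          rwa [Real.rpow_one] at h
        have hLC : M * C1 * Iφ * ε⁻¹ ≤ C := key3 C1 hC1p.le (by linarith) ε⁻¹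
          (by positivity) hT1
        calc |PhiFun f g ρ x - PhiFun f g ρ y| ≤ (M * C1 * Iφ * ε⁻¹) * |x - y| := by
              simpa [Real.norm_eq_abs] using hLip
        _ ≤ (M * C1 * Iφ * ε⁻¹) * |x - y| ^ p :=
              mul_le_mul_of_nonneg_left hbase (by positivity)
        _ ≤ C * |x - y| ^ p :=
              mul_le_mul_of_nonneg_right hLC (Real.rpow_nonneg (abs_nonneg _) p)
      · have h4M : |PhiFun f g ρ x - PhiFun f g ρ y| ≤ 4*M := by
          have hx4 := hPhiBound ρ x hρ
          have hy4 := hPhiBound ρ y hρ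
          have := abs_sub (PhiFun f g ρ x) (PhiFun f g ρ y)
          linarith
        have h1p : (1:ℝ) ≤ |x - y| ^ p := by
          have h := Real.rpow_le_rpow_of_exponent_le hgt.le hp.1
          rwa [Real.rpow_zero] at h
        have h4MC : 4*M ≤ C := by rw [hCdef]; linarith
        calc |PhiFun f g ρ x - PhiFun f g ρ y| ≤ 4*M := h4M
        _ = (4*M) * 1 := (mul_one _).symm
        _ ≤ C * (|x - y| ^ p) := mul_le_mul h4MC h1p zero_le_one hCpos.le
  · intro x
    refine ⟨?_, ?_, ?_, ?_, ?_⟩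
    · -- first derivative in x
      rw [hPhiX' ρ hρ]
      refine (hb1 x).trans ?_
      exact key3 C1 hC1p.le (by linarith) ρ⁻¹ hρinv0 hk1T
    · -- second derivative in x
      rw [hPhiXX' ρ hρ]
      show |ρ⁻¹ * (-ρ⁻¹ * (-ρ⁻¹ * Jf f (deriv (deriv g)) ρ x))| ≤ C
      have e : |ρ⁻¹ * (-ρ⁻¹ * (-ρ⁻¹ * Jf f (deriv (deriv g)) ρ x))|
          = ρ⁻¹ * (ρ⁻¹ * (ρ⁻¹ * |Jf f (deriv (deriv g)) ρ x|)) := by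
        simp only [abs_mul, abs_neg, abs_inv, abs_of_pos hρ]
      rw [e]
      have h5 : ρ⁻¹ * (ρ⁻¹ * (ρ⁻¹ * |Jf f (deriv (deriv g)) ρ x|))
          ≤ ρ⁻¹ * (ρ⁻¹ * (ρ⁻¹ * (M * C2 * Iφ * ρ))) := by
        have := hJb (deriv (deriv g)) C2 hcg2 hDom2 x
        gcongr
      have h6 : ρ⁻¹ * (ρ⁻¹ * (ρ⁻¹ * (M * C2 * Iφ * ρ))) = M * C2 * Iφ * (ρ⁻¹ * ρ⁻¹) := by
        field_simp
        try ring
        try exact Or.inl trivial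
        try exact Or.inl (Or.inl trivial)
      refine (h5.trans (le_of_eq h6)).trans ?_
      exact key3 C2 hC2p.le (by linarith) (ρ⁻¹ * ρ⁻¹) (by positivity) hk2T
    · -- rho derivative
      rw [hDρ' x ρ hρ]
      have hA : ∀ y : ℝ, |(-(ρ^2)⁻¹ * Jf f g ρ y)| ≤ M * C0 * Iφ * ρ⁻¹ := by
        intro y
        have e : |(-(ρ^2)⁻¹ * Jf f g ρ y)| = (ρ^2)⁻¹ * |Jf f g ρ y| := by
          rw [abs_mul, abs_neg, abs_inv, abs_of_pos (by positivity)]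
        rw [e]
        have h5 := mul_le_mul_of_nonneg_left (hJb g C0 hcg hDom0 y)
          (by positivity : (0:ℝ) ≤ (ρ^2)⁻¹)
        refine h5.trans (le_of_eq ?_)
        field_simp
        try ring
        try exact Or.inl trivial
        try exact Or.inl (Or.inl trivial)
      have hB : ∀ y : ℝ, |ρ⁻¹ * (-ρ⁻¹ * Jf f (fun u => u * (deriv g) u) ρ y)| ≤ M * C1 * Iφ * ρ⁻¹ := by
        intro y
        have e : |ρ⁻¹ * (-ρ⁻¹ * Jf f (fun u => u * (deriv g) u) ρ y)| = ρ⁻¹ * (ρ⁻¹ * |Jf f (fun u => u * (deriv g) u) ρ y|) := by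
          simp only [abs_mul, abs_neg, abs_inv, abs_of_pos hρ]
        rw [e]
        have h5 : ρ⁻¹ * (ρ⁻¹ * |Jf f (fun u => u * (deriv g) u) ρ y|) ≤ ρ⁻¹ * (ρ⁻¹ * (M * C1 * Iφ * ρ)) := by
          have := hJb (fun u => u * (deriv g) u) C1 hcW1 hWd1 y
          gcongr
        refine h5.trans (le_of_eq ?_)
        field_simp
        try ring
        try exact Or.inl trivial
        try exact Or.inl (Or.inl trivial)
      calc |(-(ρ^2)⁻¹ * Jf f g ρ x + ρ⁻¹ * (-ρ⁻¹ * Jf f (fun u => u * (deriv g) u) ρ x)) - (-(ρ^2)⁻¹ * Jf f g ρ 0 + ρ⁻¹ * (-ρ⁻¹ * Jf f (fun u => u * (deriv g) u) ρ 0))|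
          ≤ |(-(ρ^2)⁻¹ * Jf f g ρ x + ρ⁻¹ * (-ρ⁻¹ * Jf f (fun u => u * (deriv g) u) ρ x))|
            + |(-(ρ^2)⁻¹ * Jf f g ρ 0 + ρ⁻¹ * (-ρ⁻¹ * Jf f (fun u => u * (deriv g) u) ρ 0))| := abs_sub _ _
      _ ≤ (M * C0 * Iφ * ρ⁻¹ + M * C1 * Iφ * ρ⁻¹) + (M * C0 * Iφ * ρ⁻¹ + M * C1 * Iφ * ρ⁻¹) :=
            add_le_add ((abs_add_le _ _).trans (add_le_add (hA x) (hB x)))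
              ((abs_add_le _ _).trans (add_le_add (hA 0) (hB 0)))
      _ = M * (2*C0 + 2*C1) * Iφ * ρ⁻¹ := by ring
      _ ≤ C := key3 (2*C0 + 2*C1) (by linarith) (by linarith) ρ⁻¹ hρinv0 hk1T
    · -- mixed derivative d_x d_rho
      have hmix : (fun x' => deriv (fun r => PhiFun f g r x') ρ)
          = fun x' => (-(ρ^2)⁻¹ * Jf f g ρ x' + ρ⁻¹ * (-ρ⁻¹ * Jf f (fun u => u * (deriv g) u) ρ x')) - (-(ρ^2)⁻¹ * Jf f g ρ 0 + ρ⁻¹ * (-ρ⁻¹ * Jf f (fun u => u * (deriv g) u) ρ 0)) := funext fun x' => hDρ' x' ρ hρ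
      rw [hmix]
      have hd4 : ∀ y : ℝ, HasDerivAt (fun x' => (-(ρ^2)⁻¹ * Jf f g ρ x' + ρ⁻¹ * (-ρ⁻¹ * Jf f (fun u => u * (deriv g) u) ρ x')) - (-(ρ^2)⁻¹ * Jf f g ρ 0 + ρ⁻¹ * (-ρ⁻¹ * Jf f (fun u => u * (deriv g) u) ρ 0))) (-(ρ^2)⁻¹ * (-ρ⁻¹ * Jf f (deriv g) ρ y) + ρ⁻¹ * (-ρ⁻¹ * (-ρ⁻¹ * Jf f (fun u => (deriv g) u + u * (deriv (deriv g)) u) ρ y))) y := by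
        intro y
        exact (((hJx_g hρ y).const_mul (-(ρ^2)⁻¹)).add
          (((hJx_W1 hρ y).const_mul (-ρ⁻¹)).const_mul ρ⁻¹)).sub_const _
      rw [show deriv (fun x' => (-(ρ^2)⁻¹ * Jf f g ρ x' + ρ⁻¹ * (-ρ⁻¹ * Jf f (fun u => u * (deriv g) u) ρ x')) - (-(ρ^2)⁻¹ * Jf f g ρ 0 + ρ⁻¹ * (-ρ⁻¹ * Jf f (fun u => u * (deriv g) u) ρ 0))) = fun y => -(ρ^2)⁻¹ * (-ρ⁻¹ * Jf f (deriv g) ρ y) + ρ⁻¹ * (-ρ⁻¹ * (-ρ⁻¹ * Jf f (fun u => (deriv g) u + u * (deriv (deriv g)) u) ρ y)) from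
        funext fun y => (hd4 y).deriv]
      show |-(ρ^2)⁻¹ * (-ρ⁻¹ * Jf f (deriv g) ρ x) + ρ⁻¹ * (-ρ⁻¹ * (-ρ⁻¹ * Jf f (fun u => (deriv g) u + u * (deriv (deriv g)) u) ρ x))| ≤ C
      have hA4 : |-(ρ^2)⁻¹ * (-ρ⁻¹ * Jf f (deriv g) ρ x)| ≤ M * C1 * Iφ * (ρ⁻¹ * ρ⁻¹) := by
        have e : |-(ρ^2)⁻¹ * (-ρ⁻¹ * Jf f (deriv g) ρ x)|
            = (ρ^2)⁻¹ * (ρ⁻¹ * |Jf f (deriv g) ρ x|) := by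
          simp only [abs_mul, abs_neg, abs_inv, abs_of_pos hρ, abs_of_pos
            (by positivity : (0:ℝ) < ρ^2)]
        rw [e]
        have h5 : (ρ^2)⁻¹ * (ρ⁻¹ * |Jf f (deriv g) ρ x|)
            ≤ (ρ^2)⁻¹ * (ρ⁻¹ * (M * C1 * Iφ * ρ)) := by
          have := hJb (deriv g) C1 hcg1 hDom1 x
          gcongr
        refine h5.trans (le_of_eq ?_)
        field_simp
        try ring
        try exact Or.inl trivial
        try exact Or.inl (Or.inl trivial)
      have hB4 : |ρ⁻¹ * (-ρ⁻¹ * (-ρ⁻¹ * Jf f (fun u => (deriv g) u + u * (deriv (deriv g)) u) ρ x))|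
          ≤ M * (C1 + C2) * Iφ * (ρ⁻¹ * ρ⁻¹) := by
        have e : |ρ⁻¹ * (-ρ⁻¹ * (-ρ⁻¹ * Jf f (fun u => (deriv g) u + u * (deriv (deriv g)) u) ρ x))|
            = ρ⁻¹ * (ρ⁻¹ * (ρ⁻¹ * |Jf f (fun u => (deriv g) u + u * (deriv (deriv g)) u) ρ x|)) := by
          simp only [abs_mul, abs_neg, abs_inv, abs_of_pos hρ]
        rw [e]
        have h5 : ρ⁻¹ * (ρ⁻¹ * (ρ⁻¹ * |Jf f (fun u => (deriv g) u + u * (deriv (deriv g)) u) ρ x|))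
            ≤ ρ⁻¹ * (ρ⁻¹ * (ρ⁻¹ * (M * (C1 + C2) * Iφ * ρ))) := by
          have := hJb (fun u => (deriv g) u + u * (deriv (deriv g)) u) (C1 + C2) hcW1p hDomW1p x
          gcongr
        refine h5.trans (le_of_eq ?_)
        field_simp
        try ring
        try exact Or.inl trivial
        try exact Or.inl (Or.inl trivial)
      calc |-(ρ^2)⁻¹ * (-ρ⁻¹ * Jf f (deriv g) ρ x) + ρ⁻¹ * (-ρ⁻¹ * (-ρ⁻¹ * Jf f (fun u => (deriv g) u + u * (deriv (deriv g)) u) ρ x))| ≤ M * C1 * Iφ * (ρ⁻¹ * ρ⁻¹) + M * (C1 + C2) * Iφ * (ρ⁻¹ * ρ⁻¹) :=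
            (abs_add_le _ _).trans (add_le_add hA4 hB4)
      _ = M * (2*C1 + C2) * Iφ * (ρ⁻¹ * ρ⁻¹) := by ring
      _ ≤ C := key3 (2*C1 + C2) (by linarith) (by linarith) (ρ⁻¹ * ρ⁻¹) (by positivity) hk2T
    · -- second mixed derivative
      have hmix : (fun x' => deriv (fun r => PhiFun f g r x') ρ)
          = fun x' => (-(ρ^2)⁻¹ * Jf f g ρ x' + ρ⁻¹ * (-ρ⁻¹ * Jf f (fun u => u * (deriv g) u) ρ x')) - (-(ρ^2)⁻¹ * Jf f g ρ 0 + ρ⁻¹ * (-ρ⁻¹ * Jf f (fun u => u * (deriv g) u) ρ 0)) := funext fun x' => hDρ' x' ρ hρ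
      rw [hmix]
      have hd4 : ∀ y : ℝ, HasDerivAt (fun x' => (-(ρ^2)⁻¹ * Jf f g ρ x' + ρ⁻¹ * (-ρ⁻¹ * Jf f (fun u => u * (deriv g) u) ρ x')) - (-(ρ^2)⁻¹ * Jf f g ρ 0 + ρ⁻¹ * (-ρ⁻¹ * Jf f (fun u => u * (deriv g) u) ρ 0))) (-(ρ^2)⁻¹ * (-ρ⁻¹ * Jf f (deriv g) ρ y) + ρ⁻¹ * (-ρ⁻¹ * (-ρ⁻¹ * Jf f (fun u => (deriv g) u + u * (deriv (deriv g)) u) ρ y))) y := by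
        intro y
        exact (((hJx_g hρ y).const_mul (-(ρ^2)⁻¹)).add
          (((hJx_W1 hρ y).const_mul (-ρ⁻¹)).const_mul ρ⁻¹)).sub_const _
      rw [show deriv (fun x' => (-(ρ^2)⁻¹ * Jf f g ρ x' + ρ⁻¹ * (-ρ⁻¹ * Jf f (fun u => u * (deriv g) u) ρ x')) - (-(ρ^2)⁻¹ * Jf f g ρ 0 + ρ⁻¹ * (-ρ⁻¹ * Jf f (fun u => u * (deriv g) u) ρ 0))) = fun y => -(ρ^2)⁻¹ * (-ρ⁻¹ * Jf f (deriv g) ρ y) + ρ⁻¹ * (-ρ⁻¹ * (-ρ⁻¹ * Jf f (fun u => (deriv g) u + u * (deriv (deriv g)) u) ρ y)) from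
        funext fun y => (hd4 y).deriv]
      have hd5 : ∀ y : ℝ, HasDerivAt (fun y => -(ρ^2)⁻¹ * (-ρ⁻¹ * Jf f (deriv g) ρ y) + ρ⁻¹ * (-ρ⁻¹ * (-ρ⁻¹ * Jf f (fun u => (deriv g) u + u * (deriv (deriv g)) u) ρ y))) (-(ρ^2)⁻¹ * (-ρ⁻¹ * (-ρ⁻¹ * Jf f (deriv (deriv g)) ρ y)) + ρ⁻¹ * (-ρ⁻¹ * (-ρ⁻¹ * (-ρ⁻¹ * Jf f (fun u => 2 * (deriv (deriv g)) u + u * (deriv (deriv (deriv g))) u) ρ y)))) y := by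
        intro y
        exact (((hJx_g1 hρ y).const_mul (-ρ⁻¹)).const_mul (-(ρ^2)⁻¹)).add
          ((((hJx_W1p hρ y).const_mul (-ρ⁻¹)).const_mul (-ρ⁻¹)).const_mul ρ⁻¹)
      rw [show deriv (fun y => -(ρ^2)⁻¹ * (-ρ⁻¹ * Jf f (deriv g) ρ y) + ρ⁻¹ * (-ρ⁻¹ * (-ρ⁻¹ * Jf f (fun u => (deriv g) u + u * (deriv (deriv g)) u) ρ y))) = fun y => -(ρ^2)⁻¹ * (-ρ⁻¹ * (-ρ⁻¹ * Jf f (deriv (deriv g)) ρ y)) + ρ⁻¹ * (-ρ⁻¹ * (-ρ⁻¹ * (-ρ⁻¹ * Jf f (fun u => 2 * (deriv (deriv g)) u + u * (deriv (deriv (deriv g))) u) ρ y))) from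
        funext fun y => (hd5 y).deriv]
      show |-(ρ^2)⁻¹ * (-ρ⁻¹ * (-ρ⁻¹ * Jf f (deriv (deriv g)) ρ x)) + ρ⁻¹ * (-ρ⁻¹ * (-ρ⁻¹ * (-ρ⁻¹ * Jf f (fun u => 2 * (deriv (deriv g)) u + u * (deriv (deriv (deriv g))) u) ρ x)))| ≤ C
      have hA5 : |-(ρ^2)⁻¹ * (-ρ⁻¹ * (-ρ⁻¹ * Jf f (deriv (deriv g)) ρ x))|
          ≤ M * C2 * Iφ * (ρ⁻¹ * ρ⁻¹ * ρ⁻¹) := by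
        have e : |-(ρ^2)⁻¹ * (-ρ⁻¹ * (-ρ⁻¹ * Jf f (deriv (deriv g)) ρ x))|
            = (ρ^2)⁻¹ * (ρ⁻¹ * (ρ⁻¹ * |Jf f (deriv (deriv g)) ρ x|)) := by
          simp only [abs_mul, abs_neg, abs_inv, abs_of_pos hρ, abs_of_pos
            (by positivity : (0:ℝ) < ρ^2)]
        rw [e]
        have h5 : (ρ^2)⁻¹ * (ρ⁻¹ * (ρ⁻¹ * |Jf f (deriv (deriv g)) ρ x|))
            ≤ (ρ^2)⁻¹ * (ρ⁻¹ * (ρ⁻¹ * (M * C2 * Iφ * ρ))) := by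
          have := hJb (deriv (deriv g)) C2 hcg2 hDom2 x
          gcongr
        refine h5.trans (le_of_eq ?_)
        field_simp
        try ring
        try exact Or.inl trivial
        try exact Or.inl (Or.inl trivial)
      have hB5 : |ρ⁻¹ * (-ρ⁻¹ * (-ρ⁻¹ * (-ρ⁻¹ * Jf f (fun u => 2 * (deriv (deriv g)) u + u * (deriv (deriv (deriv g))) u) ρ x)))|
          ≤ M * (2*C2 + C3) * Iφ * (ρ⁻¹ * ρ⁻¹ * ρ⁻¹) := by
        have e : |ρ⁻¹ * (-ρ⁻¹ * (-ρ⁻¹ * (-ρ⁻¹ * Jf f (fun u => 2 * (deriv (deriv g)) u + u * (deriv (deriv (deriv g))) u) ρ x)))|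
            = ρ⁻¹ * (ρ⁻¹ * (ρ⁻¹ * (ρ⁻¹ * |Jf f (fun u => 2 * (deriv (deriv g)) u + u * (deriv (deriv (deriv g))) u) ρ x|))) := by
          simp only [abs_mul, abs_neg, abs_inv, abs_of_pos hρ]
        rw [e]
        have h5 : ρ⁻¹ * (ρ⁻¹ * (ρ⁻¹ * (ρ⁻¹ * |Jf f (fun u => 2 * (deriv (deriv g)) u + u * (deriv (deriv (deriv g))) u) ρ x|)))
            ≤ ρ⁻¹ * (ρ⁻¹ * (ρ⁻¹ * (ρ⁻¹ * (M * (2*C2 + C3) * Iφ * ρ)))) := by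
          have := hJb (fun u => 2 * (deriv (deriv g)) u + u * (deriv (deriv (deriv g))) u) (2*C2 + C3) hcW1pp hDomW1pp x
          gcongr
        refine h5.trans (le_of_eq ?_)
        field_simp
        try ring
        try exact Or.inl trivial
        try exact Or.inl (Or.inl trivial)
      calc |-(ρ^2)⁻¹ * (-ρ⁻¹ * (-ρ⁻¹ * Jf f (deriv (deriv g)) ρ x)) + ρ⁻¹ * (-ρ⁻¹ * (-ρ⁻¹ * (-ρ⁻¹ * Jf f (fun u => 2 * (deriv (deriv g)) u + u * (deriv (deriv (deriv g))) u) ρ x)))|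
          ≤ M * C2 * Iφ * (ρ⁻¹ * ρ⁻¹ * ρ⁻¹) + M * (2*C2 + C3) * Iφ * (ρ⁻¹ * ρ⁻¹ * ρ⁻¹) :=
            (abs_add_le _ _).trans (add_le_add hA5 hB5)
      _ = M * (3*C2 + C3) * Iφ * (ρ⁻¹ * ρ⁻¹ * ρ⁻¹) := by ring
      _ ≤ C := key3 (3*C2 + C3) (by linarith) (by linarith) (ρ⁻¹ * ρ⁻¹ * ρ⁻¹)
            (by positivity) hk3T
end

section
/- Let β > 0 and let g : ℝ → [0,∞) be a continuously differentiable probability density with |g(x)| ≤ C(1 ∧ |x|^{−1−β}) and |g'(x)| ≤ C(1 ∧ |x|^{−2−β}) for all x ∈ ℝ. Let f : ℝ → ℝ be measurable with ∫_ℝ |f(u)| (1 ∧ |u|^{−1−β}) du < ∞. Then the function G(ρ) := ∫_ℝ f(ρ s) g(s) ds is well-defined and continuously differentiable on (0,∞). -/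
/-!
Substituting `u = ρ s` gives `G ρ = ρ⁻¹ K (ρ⁻¹)` with `K t = ∫ f u g (t u) du`, so it suffices that
`K` is `C¹` on `(0, ∞)`. Differentiating under the integral sign, `K' t = ∫ f u u g' (t u) du`.
For `t ≥ a > 0` the decay of `g` and `g'` gives `|g (t u)|, |u g' (t u)| ≲_a min 1 |u|^(-1-β)`, so
`|f u| min 1 |u|^(-1-β)` dominates both integrands locally uniformly in `t`.
-/

open MeasureTheory Set Filter Topology

theorem contDiffOn_one_of_hasDerivAt {F F' : ℝ → ℝ} {s : Set ℝ} (hs : IsOpen s)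
    (hF : ∀ x ∈ s, HasDerivAt F (F' x) x) (hF' : ContinuousOn F' s) :
    ContDiffOn ℝ 1 F s := by
  rw [contDiffOn_one_iff_derivWithin hs.uniqueDiffOn]
  refine ⟨fun x hx => (hF x hx).differentiableAt.differentiableWithinAt, hF'.congr ?_⟩
  intro x hx
  rw [derivWithin_of_isOpen hs hx, (hF x hx).deriv]

theorem min_one_mul_le_max_one_mul_min_one {c m : ℝ} (hm : 0 ≤ m) :
    min 1 (c * m) ≤ max 1 c * min 1 m := by
  rw [mul_min_of_nonneg _ _ (zero_le_one.trans (le_max_left 1 c)), mul_one]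
  exact min_le_min (le_max_left _ _) (mul_le_mul_of_nonneg_right (le_max_right _ _) hm)

theorem abs_mul_min_one_rpow_sub_one_le {r : ℝ} (hr : r ≤ 0) (u : ℝ) :
    |u| * min 1 (|u| ^ (r - 1)) ≤ min 1 (|u| ^ r) := by
  rcases eq_or_ne u 0 with rfl | hu
  · simp only [abs_zero, zero_mul]; positivity
  have hu' : |u| ≠ 0 := abs_ne_zero.mpr hu
  rw [mul_min_of_nonneg _ _ (abs_nonneg u), mul_one, Real.rpow_sub_one hu',
    mul_div_cancel₀ _ hu']
  refine le_min ?_ (min_le_right _ _)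
  rcases le_or_gt |u| 1 with h | h
  · exact (min_le_left _ _).trans h
  · exact (min_le_right _ _).trans (Real.rpow_le_one_of_one_le_of_nonpos h.le hr)

theorem abs_comp_mul_le {h : ℝ → ℝ} {C r t u : ℝ} (hb : ∀ x, |h x| ≤ C)
    (hd : ∀ x, x ≠ 0 → |h x| ≤ C * |x| ^ r) (ht : 0 < t) (hu : u ≠ 0) :
    |h (t * u)| ≤ C * max 1 (t ^ r) * min 1 (|u| ^ r) := by
  have hC : 0 ≤ C := (abs_nonneg _).trans (hb 0)
  calc |h (t * u)| ≤ C * min 1 (|t * u| ^ r) := by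
        rw [mul_min_of_nonneg _ _ hC, mul_one]
        exact le_min (hb _) (hd _ (mul_ne_zero ht.ne' hu))
    _ = C * min 1 (t ^ r * |u| ^ r) := by
        rw [abs_mul, abs_of_pos ht, Real.mul_rpow ht.le (abs_nonneg u)]
    _ ≤ C * (max 1 (t ^ r) * min 1 (|u| ^ r)) := by
        gcongr; exact min_one_mul_le_max_one_mul_min_one (by positivity)
    _ = C * max 1 (t ^ r) * min 1 (|u| ^ r) := by ring

theorem abs_mul_comp_mul_le {h : ℝ → ℝ} {C r a x : ℝ} (hb : ∀ y, |h y| ≤ C)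
    (hd : ∀ y, y ≠ 0 → |h y| ≤ C * |y| ^ (r - 1)) (hr : r ≤ 0) (ha : 0 < a) (hax : a ≤ x)
    (u : ℝ) : |u * h (x * u)| ≤ C * max 1 (a ^ (r - 1)) * min 1 (|u| ^ r) := by
  have hC : 0 ≤ C := (abs_nonneg _).trans (hb 0)
  rcases eq_or_ne u 0 with rfl | hu
  · simp only [abs_zero, zero_mul]; positivity
  calc |u * h (x * u)| ≤ |u| * (C * max 1 (x ^ (r - 1)) * min 1 (|u| ^ (r - 1))) := by
        rw [abs_mul]; gcongr; exact abs_comp_mul_le hb hd (ha.trans_le hax) hu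
    _ = C * max 1 (x ^ (r - 1)) * (|u| * min 1 (|u| ^ (r - 1))) := by ring
    _ ≤ C * max 1 (a ^ (r - 1)) * min 1 (|u| ^ r) := by
        have hpow : x ^ (r - 1) ≤ a ^ (r - 1) := Real.rpow_le_rpow_of_nonpos ha hax (by linarith)
        exact mul_le_mul (by gcongr) (abs_mul_min_one_rpow_sub_one_le hr u) (by positivity)
          (by positivity)

section DilatedKernel

variable {f g : ℝ → ℝ} {C r : ℝ}

theorem integrable_mul_comp_mul (hf : Measurable f) (hg : Continuous g)
    (hb : ∀ x, |g x| ≤ C) (hd : ∀ x, x ≠ 0 → |g x| ≤ C * |x| ^ r)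
    (hfint : Integrable (fun u => |f u| * min 1 (|u| ^ r))) {t : ℝ} (ht : 0 < t) :
    Integrable (fun u => f u * g (t * u)) := by
  refine (hfint.const_mul (C * max 1 (t ^ r))).mono'
    (hf.mul (hg.measurable.comp (measurable_const_mul t))).aestronglyMeasurable ?_
  filter_upwards [compl_mem_ae_iff.mpr (measure_singleton (0 : ℝ))] with u hu
  rw [Real.norm_eq_abs, abs_mul]
  exact (mul_le_mul_of_nonneg_left (abs_comp_mul_le hb hd ht hu) (abs_nonneg _)).trans_eq
    (by ring)

theorem norm_mul_mul_comp_mul_le (hb : ∀ y, |g y| ≤ C)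
    (hd : ∀ y, y ≠ 0 → |g y| ≤ C * |y| ^ (r - 1)) (hr : r ≤ 0) {a x : ℝ} (ha : 0 < a)
    (hax : a ≤ x) (u : ℝ) :
    ‖f u * (u * g (x * u))‖ ≤ C * max 1 (a ^ (r - 1)) * (|f u| * min 1 (|u| ^ r)) := by
  rw [Real.norm_eq_abs, abs_mul]
  exact (mul_le_mul_of_nonneg_left (abs_mul_comp_mul_le hb hd hr ha hax u)
    (abs_nonneg _)).trans_eq (by ring)

theorem hasDerivAt_integral_mul_comp_mul (hf : Measurable f) (hg : Differentiable ℝ g)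
    (hb : ∀ x, |g x| ≤ C) (hd : ∀ x, x ≠ 0 → |g x| ≤ C * |x| ^ r)
    (hb' : ∀ x, |deriv g x| ≤ C) (hd' : ∀ x, x ≠ 0 → |deriv g x| ≤ C * |x| ^ (r - 1))
    (hr : r ≤ 0) (hfint : Integrable (fun u => |f u| * min 1 (|u| ^ r))) {t : ℝ} (ht : 0 < t) :
    HasDerivAt (fun x => ∫ u, f u * g (x * u)) (∫ u, f u * (u * deriv g (t * u))) t := by
  refine (hasDerivAt_integral_of_dominated_loc_of_deriv_le (Ioi_mem_nhds (half_lt_self ht))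
    (Eventually.of_forall fun x =>
      (hf.mul (hg.continuous.measurable.comp (measurable_const_mul x))).aestronglyMeasurable)
    (integrable_mul_comp_mul hf hg.continuous hb hd hfint ht)
    (hf.mul (measurable_id.mul
      ((measurable_deriv g).comp (measurable_const_mul t)))).aestronglyMeasurable
    (Eventually.of_forall fun u x hx =>
      norm_mul_mul_comp_mul_le (f := f) hb' hd' hr (half_pos ht) (le_of_lt hx) u)
    (hfint.const_mul _) (Eventually.of_forall fun u x _ => ?_)).2
  have := ((hg (x * u)).hasDerivAt.comp x (hasDerivAt_mul_const u)).const_mul (f u)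
  exact this.congr_deriv (by ring)

theorem continuousOn_integral_mul_mul_comp_mul (hf : Measurable f)
    (hg' : Continuous (deriv g)) (hb' : ∀ x, |deriv g x| ≤ C)
    (hd' : ∀ x, x ≠ 0 → |deriv g x| ≤ C * |x| ^ (r - 1)) (hr : r ≤ 0)
    (hfint : Integrable (fun u => |f u| * min 1 (|u| ^ r))) :
    ContinuousOn (fun t => ∫ u, f u * (u * deriv g (t * u))) (Ioi 0) := by
  intro t (ht : 0 < t)
  refine (continuousAt_of_dominated (Eventually.of_forall fun x =>
      (hf.mul (measurable_id.mul
        (hg'.measurable.comp (measurable_const_mul x)))).aestronglyMeasurable)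
    ?_ (hfint.const_mul (C * max 1 ((t / 2) ^ (r - 1))))
    (Eventually.of_forall fun u => by fun_prop)).continuousWithinAt
  filter_upwards [Ioi_mem_nhds (half_lt_self ht)] with x hx
  exact Eventually.of_forall (norm_mul_mul_comp_mul_le hb' hd' hr (half_pos ht) (le_of_lt hx))

theorem contDiffOn_integral_mul_comp_mul (hf : Measurable f) (hg : ContDiff ℝ 1 g)
    (hb : ∀ x, |g x| ≤ C) (hd : ∀ x, x ≠ 0 → |g x| ≤ C * |x| ^ r)
    (hb' : ∀ x, |deriv g x| ≤ C) (hd' : ∀ x, x ≠ 0 → |deriv g x| ≤ C * |x| ^ (r - 1))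
    (hr : r ≤ 0) (hfint : Integrable (fun u => |f u| * min 1 (|u| ^ r))) :
    ContDiffOn ℝ 1 (fun t => ∫ u, f u * g (t * u)) (Ioi 0) :=
  contDiffOn_one_of_hasDerivAt isOpen_Ioi
    (fun _ ht => hasDerivAt_integral_mul_comp_mul hf (hg.differentiable one_ne_zero)
      hb hd hb' hd' hr hfint ht)
    (continuousOn_integral_mul_mul_comp_mul hf (hg.continuous_deriv le_rfl) hb' hd' hr hfint)

end DilatedKernel

theorem integral_comp_mul_mul_eq_inv_mul (f g : ℝ → ℝ) {ρ : ℝ} (hρ : 0 < ρ) :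
    ∫ s, f (ρ * s) * g s = ρ⁻¹ * ∫ u, f u * g (ρ⁻¹ * u) := by
  have := Measure.integral_comp_mul_left (fun u => f u * g (ρ⁻¹ * u)) ρ
  simpa only [inv_mul_cancel_left₀ hρ.ne', abs_of_pos (inv_pos.mpr hρ), smul_eq_mul] using this

theorem statement14_general
    {β C : ℝ} (hβ : 0 < β)
    (g : ℝ → ℝ) (hg1 : ContDiff ℝ 1 g)
    (hgb : ∀ x : ℝ, |g x| ≤ C)
    (hgd : ∀ x : ℝ, x ≠ 0 → |g x| ≤ C * |x| ^ (-1 - β))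
    (hg'b : ∀ x : ℝ, |deriv g x| ≤ C)
    (hg'd : ∀ x : ℝ, x ≠ 0 → |deriv g x| ≤ C * |x| ^ (-2 - β))
    (f : ℝ → ℝ) (hf : Measurable f)
    (hfint : Integrable (fun u : ℝ => |f u| * min 1 (|u| ^ (-1 - β)))) :
    (∀ ρ > (0 : ℝ), Integrable (fun s : ℝ => f (ρ * s) * g s)) ∧
    ContDiffOn ℝ 1 (fun ρ : ℝ => ∫ s : ℝ, f (ρ * s) * g s) (Set.Ioi (0 : ℝ)) := by
  have hr : -1 - β ≤ 0 := by linarith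
  have hg'd' : ∀ x, x ≠ 0 → |deriv g x| ≤ C * |x| ^ (-1 - β - 1) := fun x hx =>
    (hg'd x hx).trans_eq (by ring_nf)
  have hinv : ContDiffOn ℝ 1 (fun ρ : ℝ => ρ⁻¹) (Ioi 0) :=
    (contDiffOn_inv ℝ).mono fun _ hx => (mem_Ioi.mp hx).ne'
  refine ⟨fun ρ hρ => ?_, ?_⟩
  · have := (integrable_mul_comp_mul hf hg1.continuous hgb hgd hfint
      (inv_pos.mpr hρ)).comp_mul_left' hρ.ne'
    simpa only [inv_mul_cancel_left₀ hρ.ne'] using this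
  · have hK := contDiffOn_integral_mul_comp_mul hf hg1 hgb hgd hg'b hg'd' hr hfint
    exact (hinv.mul (hK.comp hinv fun _ hx => inv_pos.mpr (mem_Ioi.mp hx))).congr fun ρ hρ =>
      integral_comp_mul_mul_eq_inv_mul f g hρ

/-- the differentiability claim of Remark 5.1 of the paper: let `g` be a
`C¹` probability density with `|g(x)| ≤ C(1 ∧ |x|^{−1−β})` and
`|g'(x)| ≤ C(1 ∧ |x|^{−2−β})`, and let `f` be measurable with
`∫ |f(u)| (1 ∧ |u|^{−1−β}) du < ∞`. Then `G(ρ) = ∫ f(ρs) g(s) ds` is well-defined and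
continuously differentiable on `(0,∞)`. -/
theorem statement14
    {β C : ℝ} (hβ : 0 < β) (hC : 0 < C)
    (g : ℝ → ℝ) (hg0 : ∀ x, 0 ≤ g x) (hg1 : ContDiff ℝ 1 g)
    (hgdens : ∫ x : ℝ, g x = 1)
    (hgb : ∀ x : ℝ, |g x| ≤ C)
    (hgd : ∀ x : ℝ, x ≠ 0 → |g x| ≤ C * |x| ^ (-1 - β))
    (hg'b : ∀ x : ℝ, |deriv g x| ≤ C)
    (hg'd : ∀ x : ℝ, x ≠ 0 → |deriv g x| ≤ C * |x| ^ (-2 - β))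
    (f : ℝ → ℝ) (hf : Measurable f)
    (hfint : Integrable (fun u : ℝ => |f u| * min 1 (|u| ^ (-1 - β)))) :
    (∀ ρ > (0 : ℝ), Integrable (fun s : ℝ => f (ρ * s) * g s)) ∧
    ContDiffOn ℝ 1 (fun ρ : ℝ => ∫ s : ℝ, f (ρ * s) * g s) (Set.Ioi (0 : ℝ)) :=
  statement14_general hβ g hg1 hgb hgd hg'b hg'd f hf hfint
end
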